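/- arXiv:1807.09344 — 11 statements merged into one kernel-verified Lean document; each statement's English description precedes it below -/
import Mathlib

section
/- For all complex numbers q and z with |q| < 1, the infinite product (-zq;q)_∞ equals the sum ∑_{m=0}^{∞} z^m q^{m(m+1)/2} / (q;q)_m. -/
/-!
Write `S(z) = ∑ₘ tₘ(z)` with `tₘ(z) = zᵐ q^{m(m+1)/2} / (q;q)ₘ`. Splitting
`1 = q^{m+1} + (1 - q^{m+1})` gives `tₘ₊₁(z) = tₘ₊₁(zq) + zq tₘ(zq)`, hence the functional equation
`S(z) = (1 + zq) S(zq)` and, iterating, `S(z) = (-zq;q)ₙ S(zqⁿ)`. Since `tₘ(zqⁿ) = q^{nm} tₘ(z)`,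
dominated convergence gives `S(zqⁿ) → t₀ = 1`, while `(-zq;q)ₙ → (-zq;q)_∞`.
-/

open Filter Finset Topology

variable {𝕜 : Type*} [NormedField 𝕜]

noncomputable section

def qPochhammer (a q : 𝕜) (n : ℕ) : 𝕜 := ∏ i ∈ range n, (1 - a * q ^ i)

lemma qPochhammer_succ (a q : 𝕜) (n : ℕ) :
    qPochhammer a q (n + 1) = qPochhammer a q n * (1 - a * q ^ n) :=
  prod_range_succ _ n

lemma one_sub_mul_pow_ne_zero {a q : 𝕜} (ha : ‖a‖ < 1) (hq : ‖q‖ ≤ 1) (n : ℕ) :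
    1 - a * q ^ n ≠ 0 := by
  have hlt : ‖a * q ^ n‖ < 1 := by
    rw [norm_mul, norm_pow]
    exact mul_lt_one_of_nonneg_of_lt_one_left (norm_nonneg a) ha (pow_le_one₀ (norm_nonneg q) hq)
  intro h
  rw [← sub_eq_zero.1 h, norm_one] at hlt
  exact hlt.false

lemma qPochhammer_ne_zero {a q : 𝕜} (ha : ‖a‖ < 1) (hq : ‖q‖ ≤ 1) (n : ℕ) :
    qPochhammer a q n ≠ 0 :=
  prod_ne_zero_iff.2 fun i _ => one_sub_mul_pow_ne_zero ha hq i

lemma add_one_mul_add_two_div_two (m : ℕ) :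
    (m + 1) * (m + 1 + 1) / 2 = m * (m + 1) / 2 + (m + 1) := by
  rw [show (m + 1) * (m + 1 + 1) = m * (m + 1) + 2 * (m + 1) by ring,
    Nat.add_mul_div_left _ _ two_pos]

def eulerTerm (q z : 𝕜) (m : ℕ) : 𝕜 := z ^ m * q ^ (m * (m + 1) / 2) / qPochhammer q q m

def eulerSeries (q z : 𝕜) : 𝕜 := ∑' m, eulerTerm q z m

@[simp]
lemma eulerTerm_zero (q z : 𝕜) : eulerTerm q z 0 = 1 := by
  simp [eulerTerm, qPochhammer]

lemma eulerTerm_mul_pow (q z : 𝕜) (n m : ℕ) :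
    eulerTerm q (z * q ^ n) m = q ^ (n * m) * eulerTerm q z m := by
  simp only [eulerTerm, mul_pow, ← pow_mul]
  ring

section UnitDisc

variable {q : 𝕜} (hq : ‖q‖ < 1)
include hq

lemma eulerTerm_succ (z : 𝕜) (m : ℕ) :
    eulerTerm q z (m + 1) = eulerTerm q z m * (z * q ^ (m + 1) / (1 - q * q ^ m)) := by
  have := qPochhammer_ne_zero hq hq.le m
  have := one_sub_mul_pow_ne_zero hq hq.le m
  simp only [eulerTerm, add_one_mul_add_two_div_two, qPochhammer_succ]
  field_simp
  ring

lemma eulerTerm_succ_eq_add (z : 𝕜) (m : ℕ) :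
    eulerTerm q z (m + 1) = eulerTerm q (z * q) (m + 1) + z * q * eulerTerm q (z * q) m := by
  have := qPochhammer_ne_zero hq hq.le m
  have := one_sub_mul_pow_ne_zero hq hq.le m
  simp only [eulerTerm, add_one_mul_add_two_div_two, qPochhammer_succ]
  field_simp
  ring

lemma summable_norm_eulerTerm (z : 𝕜) : Summable fun m => ‖eulerTerm q z m‖ := by
  have hpow : Tendsto (fun m : ℕ => q ^ (m + 1)) atTop (𝓝 0) :=
    (tendsto_pow_atTop_nhds_zero_of_norm_lt_one hq).comp (tendsto_add_atTop_nat 1)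
  have hratio : Tendsto (fun m : ℕ => z * q ^ (m + 1) / (1 - q * q ^ m)) atTop (𝓝 0) := by
    simpa [← pow_succ', Pi.div_def] using
      (hpow.const_mul z).div (tendsto_const_nhds.sub hpow) (by simp)
  refine summable_of_ratio_norm_eventually_le one_half_lt_one ?_
  filter_upwards [hratio.norm.eventually_le_const (by norm_num : ‖(0 : 𝕜)‖ < 1 / 2)] with m hm
  rw [norm_norm, norm_norm, eulerTerm_succ hq, norm_mul, mul_comm]
  exact mul_le_mul_of_nonneg_right hm (norm_nonneg _)

variable [CompleteSpace 𝕜]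

lemma eulerSeries_eq_one_add_mul_eulerSeries (z : 𝕜) :
    eulerSeries q z = (1 + z * q) * eulerSeries q (z * q) := by
  have hs := (summable_norm_eulerTerm hq (z * q)).of_norm
  calc eulerSeries q z = 1 + ∑' m, eulerTerm q z (m + 1) := by
        rw [eulerSeries, (summable_norm_eulerTerm hq z).of_norm.tsum_eq_zero_add, eulerTerm_zero]
    _ = 1 + (∑' m, eulerTerm q (z * q) (m + 1) + z * q * eulerSeries q (z * q)) := by
        rw [tsum_congr (eulerTerm_succ_eq_add hq z), eulerSeries, ← tsum_mul_left,
          ((summable_nat_add_iff 1).2 hs).tsum_add (hs.mul_left _)]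
    _ = (1 + z * q) * eulerSeries q (z * q) := by
        rw [eulerSeries, hs.tsum_eq_zero_add, eulerTerm_zero]
        ring

lemma eulerSeries_eq_prod_mul_eulerSeries (z : 𝕜) (n : ℕ) :
    eulerSeries q z = (∏ i ∈ range n, (1 + z * q ^ (i + 1))) * eulerSeries q (z * q ^ n) := by
  induction n generalizing z with
  | zero => simp
  | succ n ih =>
    rw [eulerSeries_eq_one_add_mul_eulerSeries hq z, ih (z * q), prod_range_succ']
    simp only [mul_assoc, ← pow_succ']
    ring

lemma tendsto_eulerSeries_mul_pow (z : 𝕜) :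
    Tendsto (fun n => eulerSeries q (z * q ^ n)) atTop (𝓝 1) := by
  have hlim : ∀ m, Tendsto (fun n => eulerTerm q (z * q ^ n) m) atTop
      (𝓝 (if m = 0 then 1 else 0)) := by
    rintro (_ | m)
    · simp
    · have hqm : ‖q ^ (m + 1)‖ < 1 := by
        rw [norm_pow]
        exact pow_lt_one₀ (norm_nonneg q) hq m.succ_ne_zero
      simpa [eulerTerm_mul_pow, pow_mul'] using
        (tendsto_pow_atTop_nhds_zero_of_norm_lt_one hqm).mul_const (eulerTerm q z (m + 1))
  have hbound : ∀ n m, ‖eulerTerm q (z * q ^ n) m‖ ≤ ‖eulerTerm q z m‖ := fun n m => by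
    rw [eulerTerm_mul_pow, norm_mul, norm_pow]
    exact mul_le_of_le_one_left (norm_nonneg _) (pow_le_one₀ (norm_nonneg q) hq.le)
  simpa [eulerSeries] using tendsto_tsum_of_dominated_convergence
    (summable_norm_eulerTerm hq z) hlim (Eventually.of_forall hbound)

lemma multipliable_one_add_mul_pow_succ (z : 𝕜) :
    Multipliable fun i : ℕ => 1 + z * q ^ (i + 1) := by
  refine multipliable_one_add_of_summable ?_
  refine ((summable_geometric_of_lt_one (norm_nonneg q) hq).mul_left (‖z‖ * ‖q‖)).congr
    fun i => ?_
  rw [norm_mul, norm_pow, pow_succ]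
  ring

end UnitDisc

end

/-- Euler's identity: for `|q| < 1`,
`(-zq;q)_∞ = ∑_{m=0}^∞ z^m q^{m(m+1)/2} / (q;q)_m`. -/
theorem euler_distinct_parts_identity (q z : ℂ) (hq : ‖q‖ < 1) :
    (∏' i : ℕ, (1 + z * q ^ (i + 1))) =
      ∑' m : ℕ, z ^ m * q ^ (m * (m + 1) / 2) /
        ∏ i ∈ Finset.range m, (1 - q * q ^ i) := by
  have hprod := (multipliable_one_add_mul_pow_succ hq z).hasProd.tendsto_prod_nat.mul
    (tendsto_eulerSeries_mul_pow hq z)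
  simp only [← eulerSeries_eq_prod_mul_eulerSeries hq, mul_one] at hprod
  exact tendsto_nhds_unique hprod tendsto_const_nhds
end

section
/- For all complex numbers q and z with |q| < 1, the sum of z^{|S|} q^{Σ_{s∈S} s} over all finite subsets S of the positive integers equals the infinite product ∏_{i=1}^{∞} (1 + z q^i). -/
theorem Finset.pow_card_mul_pow_sum {ι M : Type*} [CommMonoid M] (S : Finset ι) (a b : M)
    (f : ι → ℕ) : a ^ S.card * b ^ (∑ s ∈ S, f s) = ∏ s ∈ S, a * b ^ f s := by
  rw [Finset.prod_mul_distrib, Finset.prod_const, Finset.prod_pow_eq_pow_sum]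

theorem summable_norm_mul_pow_pnat {q : ℂ} (z : ℂ) (hq : ‖q‖ < 1) :
    Summable fun s : ℕ+ => ‖z * q ^ (s : ℕ)‖ := by
  simp only [norm_mul, norm_pow]
  exact ((summable_geometric_of_lt_one (norm_nonneg q) hq).mul_left _).subtype _

/-- The sum of weights `z^|S| q^(Σ_{s∈S} s)` over all finite subsets `S` of the
positive integers equals `∏_{i=1}^∞ (1 + z q^i)`, for `|q| < 1`. -/
theorem tiling_generating_function (q z : ℂ) (hq : ‖q‖ < 1) :
    (∑' S : Finset ℕ+, z ^ S.card * q ^ (∑ s ∈ S, (s : ℕ))) =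
      ∏' i : ℕ, (1 + z * q ^ (i + 1)) := by
  calc (∑' S : Finset ℕ+, z ^ S.card * q ^ (∑ s ∈ S, (s : ℕ)))
      = ∑' S : Finset ℕ+, ∏ s ∈ S, z * q ^ (s : ℕ) := by
        simp only [Finset.pow_card_mul_pow_sum]
    _ = ∏' s : ℕ+, (1 + z * q ^ (s : ℕ)) :=
        (tprod_one_add (summable_finsetProd_of_summable_norm
          (summable_norm_mul_pow_pnat z hq))).symm
    _ = ∏' i : ℕ, (1 + z * q ^ (i + 1)) :=
        tprod_pnat_eq_tprod_succ (f := fun n => 1 + z * q ^ n)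
end

section
/- Fix a nonnegative integer m. For all complex q with |q| < 1, the sum of q^{Σ_{s∈S} s} over all m-element subsets S of the positive integers equals q^{m(m+1)/2} / (q;q)_m. -/
/-!
An `(m+1)`-subset `S` of `ℕ+` is determined by its least element `k` and the `m`-subset `T` with
`S = {k} ∪ (k + T)`, and then `∑ S = (m + 1) k + ∑ T`. Summing the geometric series over `k`
multiplies the generating function of `m`-subsets by `q^(m+1) / (1 - q^(m+1))`, and the closed form
follows by induction on `m`. Absolute summability, needed to split the double sum, follows by the
same induction.
-/

open Finset

namespace PNatSubsets

def shiftInsert (k : ℕ+) (T : Finset ℕ+) : Finset ℕ+ :=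
  insert k (T.map (addLeftEmbedding k))

section shiftInsert

variable {k : ℕ+} {T : Finset ℕ+}

lemma lt_of_mem_map_addLeftEmbedding {x : ℕ+} (hx : x ∈ T.map (addLeftEmbedding k)) :
    k < x := by
  obtain ⟨t, -, rfl⟩ := mem_map.mp hx
  exact PNat.lt_add_right k t

lemma notMem_map_addLeftEmbedding : k ∉ T.map (addLeftEmbedding k) :=
  fun h => (lt_of_mem_map_addLeftEmbedding h).false

lemma card_shiftInsert : #(shiftInsert k T) = #T + 1 := by
  rw [shiftInsert, card_insert_of_notMem notMem_map_addLeftEmbedding, card_map]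

lemma min'_shiftInsert (h : (shiftInsert k T).Nonempty) : (shiftInsert k T).min' h = k := by
  refine le_antisymm (min'_le _ _ (mem_insert_self _ _)) ?_
  rcases mem_insert.mp (min'_mem _ h) with hk | hlt
  · exact hk.ge
  · exact (lt_of_mem_map_addLeftEmbedding hlt).le

lemma erase_shiftInsert : (shiftInsert k T).erase k = T.map (addLeftEmbedding k) :=
  erase_insert notMem_map_addLeftEmbedding

lemma sum_coe_shiftInsert :
    ∑ s ∈ shiftInsert k T, (s : ℕ) = (#T + 1) * k + ∑ t ∈ T, (t : ℕ) := by
  rw [shiftInsert, sum_insert notMem_map_addLeftEmbedding, sum_map]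
  simp only [addLeftEmbedding_apply, PNat.add_coe, sum_add_distrib, sum_const, smul_eq_mul]
  ring

lemma shiftInsert_inj {k' : ℕ+} {T' : Finset ℕ+} :
    shiftInsert k T = shiftInsert k' T' ↔ k = k' ∧ T = T' := by
  refine ⟨fun h => ?_, fun ⟨hk, hT⟩ => hk ▸ hT ▸ rfl⟩
  have hne : (shiftInsert k T).Nonempty := ⟨k, mem_insert_self _ _⟩
  obtain rfl : k = k' := calc
    k = (shiftInsert k T).min' hne := (min'_shiftInsert hne).symm
    _ = (shiftInsert k' T').min' (h ▸ hne) := by simp only [h]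
    _ = k' := min'_shiftInsert _
  have hT := congrArg (·.erase k) h
  simp only [erase_shiftInsert] at hT
  exact ⟨rfl, map_injective _ hT⟩

lemma shiftInsert_min'_image_sub {S : Finset ℕ+} (hS : S.Nonempty) :
    shiftInsert (S.min' hS) ((S.erase (S.min' hS)).image (· - S.min' hS)) = S := by
  set b := S.min' hS
  have hmap : ((S.erase b).image (· - b)).map (addLeftEmbedding b) = S.erase b := by
    rw [map_eq_image, image_image]
    refine (image_congr fun x hx => PNat.add_sub_of_lt ?_).trans image_id
    exact lt_of_le_of_ne (S.min'_le x (mem_of_mem_erase hx)) (ne_of_mem_erase hx).symm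
  rw [shiftInsert, hmap, insert_erase (S.min'_mem hS)]

end shiftInsert

noncomputable def shiftInsertEquiv (m : ℕ) :
    ℕ+ × {T : Finset ℕ+ // #T = m} ≃ {S : Finset ℕ+ // #S = m + 1} :=
  Equiv.ofBijective (fun p => ⟨shiftInsert p.1 p.2, by rw [card_shiftInsert, p.2.2]⟩) <| by
    refine ⟨fun p p' h => ?_, fun ⟨S, hS⟩ => ?_⟩
    · obtain ⟨hk, hT⟩ := shiftInsert_inj.mp (congrArg Subtype.val h)
      exact Prod.ext hk (Subtype.ext hT)
    · have hne : S.Nonempty := card_pos.mp (by omega)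
      set T := (S.erase (S.min' hne)).image (· - S.min' hne)
      have hST := shiftInsert_min'_image_sub hne
      have hT : #T = m := by
        have := card_shiftInsert (k := S.min' hne) (T := T)
        rw [hST] at this
        omega
      exact ⟨(S.min' hne, ⟨T, hT⟩), Subtype.ext hST⟩

@[simp]
lemma coe_shiftInsertEquiv_apply {m : ℕ} (p : ℕ+ × {T : Finset ℕ+ // #T = m}) :
    (shiftInsertEquiv m p : Finset ℕ+) = shiftInsert p.1 p.2 :=
  rfl

lemma pow_sum_coe_shiftInsert {M : Type*} [Monoid M] (q : M) (k : ℕ+) (T : Finset ℕ+) :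
    q ^ ∑ s ∈ shiftInsert k T, (s : ℕ) =
      (q ^ (#T + 1)) ^ (k : ℕ) * q ^ ∑ t ∈ T, (t : ℕ) := by
  rw [sum_coe_shiftInsert, pow_add, pow_mul]

section Analysis

variable {K : Type*} [NormedField K] {q : K}

lemma summable_norm_pow_pnat {x : K} (hx : ‖x‖ < 1) :
    Summable fun k : ℕ+ => ‖x ^ (k : ℕ)‖ := by
  simp only [norm_pow]
  exact (summable_geometric_of_lt_one (norm_nonneg x) hx).comp_injective PNat.coe_injective

lemma tsum_pow_pnat [CompleteSpace K] {x : K} (hx : ‖x‖ < 1) :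
    ∑' k : ℕ+, x ^ (k : ℕ) = x / (1 - x) := by
  rw [tsum_pnat_eq_tsum_succ]
  simp only [pow_succ']
  rw [tsum_mul_left, tsum_geometric_of_norm_lt_one hx, div_eq_mul_inv]

lemma norm_pow_lt_one (hq : ‖q‖ < 1) {n : ℕ} (hn : n ≠ 0) : ‖q ^ n‖ < 1 := by
  rw [norm_pow]
  exact pow_lt_one₀ (norm_nonneg q) hq hn

theorem summable_norm_pow_sum (hq : ‖q‖ < 1) (m : ℕ) :
    Summable fun S : {S : Finset ℕ+ // #S = m} => ‖q ^ ∑ s ∈ S.1, (s : ℕ)‖ := by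
  induction m with
  | zero =>
    have : Subsingleton {S : Finset ℕ+ // #S = 0} :=
      ⟨fun S T => Subtype.ext <| (card_eq_zero.mp S.2).trans (card_eq_zero.mp T.2).symm⟩
    exact .of_finite
  | succ m ih =>
    rw [← (shiftInsertEquiv m).summable_iff]
    refine ((summable_norm_pow_pnat (norm_pow_lt_one hq m.add_one_ne_zero)).mul_norm ih).congr ?_
    rintro ⟨k, T, rfl⟩
    simp only [Function.comp_apply, coe_shiftInsertEquiv_apply, pow_sum_coe_shiftInsert, norm_mul]

theorem tsum_pow_sum_succ [CompleteSpace K] (hq : ‖q‖ < 1) (m : ℕ) :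
    ∑' S : {S : Finset ℕ+ // #S = m + 1}, q ^ ∑ s ∈ S.1, (s : ℕ) =
      q ^ (m + 1) / (1 - q ^ (m + 1)) *
        ∑' T : {T : Finset ℕ+ // #T = m}, q ^ ∑ t ∈ T.1, (t : ℕ) := by
  set x := q ^ (m + 1)
  have hx : ‖x‖ < 1 := norm_pow_lt_one hq m.add_one_ne_zero
  calc ∑' S : {S : Finset ℕ+ // #S = m + 1}, q ^ ∑ s ∈ S.1, (s : ℕ)
      = ∑' p : ℕ+ × {T : Finset ℕ+ // #T = m},
          x ^ (p.1 : ℕ) * q ^ ∑ t ∈ p.2.1, (t : ℕ) := by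
        rw [← (shiftInsertEquiv m).tsum_eq]
        refine tsum_congr ?_
        rintro ⟨k, T, rfl⟩
        rw [coe_shiftInsertEquiv_apply, pow_sum_coe_shiftInsert]
    _ = (∑' k : ℕ+, x ^ (k : ℕ)) *
          ∑' T : {T : Finset ℕ+ // #T = m}, q ^ ∑ t ∈ T.1, (t : ℕ) :=
        (tsum_mul_tsum_of_summable_norm (R := K) (summable_norm_pow_pnat hx)
          (summable_norm_pow_sum hq m)).symm
    _ = _ := by rw [tsum_pow_pnat hx]

lemma triangle_succ_div_two (m : ℕ) :
    (m + 1) * (m + 1 + 1) / 2 = m * (m + 1) / 2 + (m + 1) := by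
  rw [show (m + 1) * (m + 1 + 1) = m * (m + 1) + (m + 1) * 2 by ring,
    Nat.add_mul_div_right _ _ two_pos]

theorem tsum_pow_sum [CompleteSpace K] (hq : ‖q‖ < 1) (m : ℕ) :
    ∑' S : {S : Finset ℕ+ // #S = m}, q ^ ∑ s ∈ S.1, (s : ℕ) =
      q ^ (m * (m + 1) / 2) / ∏ i ∈ range m, (1 - q * q ^ i) := by
  induction m with
  | zero =>
    rw [tsum_eq_single (⟨∅, rfl⟩ : {S : Finset ℕ+ // #S = 0})
      fun S hS => absurd (Subtype.ext (card_eq_zero.mp S.2)) hS]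
    simp
  | succ m ih =>
    rw [tsum_pow_sum_succ hq, ih, prod_range_succ, triangle_succ_div_two, pow_add, ← pow_succ',
      div_mul_div_comm]
    ring

end Analysis

end PNatSubsets

/-- For fixed `m`, the sum of `q^(Σ_{s∈S} s)` over all `m`-element subsets `S`
of the positive integers equals `q^{m(m+1)/2} / (q;q)_m`, for `|q| < 1`. -/
theorem tiling_m_black_squares (m : ℕ) (q : ℂ) (hq : ‖q‖ < 1) :
    (∑' S : {S : Finset ℕ+ // S.card = m}, q ^ (∑ s ∈ (S : Finset ℕ+), (s : ℕ))) =
      q ^ (m * (m + 1) / 2) / ∏ i ∈ Finset.range m, (1 - q * q ^ i) :=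
  PNatSubsets.tsum_pow_sum hq m
end

section
/- For all complex numbers q and z with |q| < 1, (-zq;q)_∞ = ∑_{m=0}^{∞} ((-zq;q)_m/(q;q)_m) z^m q^{m(3m+1)/2} (1 + z q^{2m+1}). -/
/-!
Write `f(w)` for the right-hand side with `z` replaced by `w`. Its terms satisfy the telescoping
identity `T_m(w) - (1 + wq) T_m(wq) = G_m - G_{m+1}` with
`G_m = (-wq;q)_m / (q;q)_m · w^m q^{m(3m+1)/2} (1 - q^m)` and `G_0 = 0`, so
`f(w) = (1 + wq) f(wq)` and by iteration `f(z) = (-zq;q)_n f(zq^n)`. The series converges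
locally uniformly in `w`, so `f` is continuous with `f(0) = 1`, and letting `n → ∞` identifies
`f(z)` with the infinite product.
-/

open Filter Topology

namespace Sylvester

variable {q : ℂ}

lemma pentagonal_succ (m : ℕ) :
    (m + 1) * (3 * (m + 1) + 1) / 2 = m * (3 * m + 1) / 2 + (3 * m + 2) := by
  rw [show (m + 1) * (3 * (m + 1) + 1) = m * (3 * m + 1) + (3 * m + 2) * 2 by ring,
    Nat.add_mul_div_right _ _ two_pos]

lemma norm_one_add_mul_pow_le (hq : ‖q‖ ≤ 1) {w : ℂ} {R : ℝ} (hw : ‖w‖ ≤ R) (k : ℕ) :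
    ‖1 + w * q ^ k‖ ≤ 1 + R := by
  calc ‖1 + w * q ^ k‖ ≤ 1 + ‖w‖ * ‖q‖ ^ k := by
        simpa [norm_mul, norm_pow] using norm_add_le (1 : ℂ) (w * q ^ k)
    _ ≤ 1 + R := by
        gcongr
        exact (mul_le_of_le_one_right (norm_nonneg w) (pow_le_one₀ (norm_nonneg q) hq)).trans hw

lemma one_sub_norm_le_norm_one_sub_pow (hq : ‖q‖ ≤ 1) (i : ℕ) :
    1 - ‖q‖ ≤ ‖1 - q ^ (i + 1)‖ := by
  calc 1 - ‖q‖ ≤ 1 - ‖q‖ ^ (i + 1) := by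
        gcongr; exact pow_le_of_le_one (norm_nonneg q) hq i.succ_ne_zero
    _ ≤ ‖1 - q ^ (i + 1)‖ := by simpa [norm_pow] using norm_sub_norm_le (1 : ℂ) (q ^ (i + 1))

lemma one_sub_pow_succ_ne_zero (hq : ‖q‖ < 1) (i : ℕ) : 1 - q ^ (i + 1) ≠ 0 :=
  norm_pos_iff.mp ((sub_pos.mpr hq).trans_le (one_sub_norm_le_norm_one_sub_pow hq.le i))

lemma prod_one_add_mul_pow_shift (w : ℂ) (m : ℕ) :
    (1 + w * q) * ∏ i ∈ Finset.range m, (1 + w * q * q ^ (i + 1)) =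
      (∏ i ∈ Finset.range m, (1 + w * q ^ (i + 1))) * (1 + w * q ^ (m + 1)) := by
  rw [← Finset.prod_range_succ (fun i => 1 + w * q ^ (i + 1)),
    Finset.prod_range_succ' (fun i => 1 + w * q ^ (i + 1)), mul_comm]
  simp only [zero_add, pow_one, pow_succ' q (_ + 1), mul_assoc]

noncomputable def coeff (q w : ℂ) (m : ℕ) : ℂ :=
  (∏ i ∈ Finset.range m, (1 + w * q ^ (i + 1))) /
    (∏ i ∈ Finset.range m, (1 - q ^ (i + 1))) * w ^ m

noncomputable def term (q w : ℂ) (m : ℕ) : ℂ :=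
  coeff q w m * q ^ (m * (3 * m + 1) / 2) * (1 + w * q ^ (2 * m + 1))

noncomputable def antidiff (q w : ℂ) (m : ℕ) : ℂ :=
  coeff q w m * q ^ (m * (3 * m + 1) / 2) * (1 - q ^ m)

noncomputable def series (q w : ℂ) : ℂ := ∑' m, term q w m

lemma term_sub_mul_term_eq_antidiff_sub (hq : ‖q‖ < 1) (w : ℂ) (m : ℕ) :
    term q w m - (1 + w * q) * term q (w * q) m = antidiff q w m - antidiff q w (m + 1) := by
  have hshift := prod_one_add_mul_pow_shift (q := q) w m
  have hm := one_sub_pow_succ_ne_zero hq m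
  simp only [term, antidiff, coeff, Finset.prod_range_succ, pentagonal_succ]
  set B := ∏ i ∈ Finset.range m, (1 - q ^ (i + 1))
  have hB : B ≠ 0 := Finset.prod_ne_zero_iff.mpr fun i _ => one_sub_pow_succ_ne_zero hq i
  linear_combination (norm := skip)
    -((w * q) ^ m * q ^ (m * (3 * m + 1) / 2) * (1 + w * q * q ^ (2 * m + 1)) / B) * hshift
  field_simp
  ring

lemma summable_pow_mul_pow_pentagonal {r : ℝ} (hr0 : 0 ≤ r) (hr : r < 1) (a : ℝ) :
    Summable fun m : ℕ => a ^ m * r ^ (m * (3 * m + 1) / 2) := by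
  refine summable_of_ratio_norm_eventually_le one_half_lt_one ?_
  have hratio : Tendsto (fun m : ℕ => |a| * r ^ 2 * (r ^ 3) ^ m) atTop (𝓝 0) := by
    simpa using (tendsto_pow_atTop_nhds_zero_of_lt_one (by positivity)
      (pow_lt_one₀ hr0 hr three_ne_zero)).const_mul (|a| * r ^ 2)
  filter_upwards [hratio.eventually_le_const one_half_pos] with m hm
  calc ‖a ^ (m + 1) * r ^ ((m + 1) * (3 * (m + 1) + 1) / 2)‖
      = |a| * r ^ 2 * (r ^ 3) ^ m * ‖a ^ m * r ^ (m * (3 * m + 1) / 2)‖ := by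
        simp only [pentagonal_succ, norm_mul, norm_pow, Real.norm_eq_abs, abs_of_nonneg hr0]
        ring
    _ ≤ 1 / 2 * ‖a ^ m * r ^ (m * (3 * m + 1) / 2)‖ := by gcongr

lemma norm_coeff_le (hq : ‖q‖ < 1) {w : ℂ} {R : ℝ} (hw : ‖w‖ ≤ R) (m : ℕ) :
    ‖coeff q w m‖ ≤ ((1 + R) * R / (1 - ‖q‖)) ^ m := by
  have hR : 0 ≤ R := (norm_nonneg w).trans hw
  have hnum : ∏ i ∈ Finset.range m, ‖1 + w * q ^ (i + 1)‖ ≤ (1 + R) ^ m := by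
    simpa using Finset.prod_le_prod (s := Finset.range m) (fun _ _ => norm_nonneg _)
      fun i _ => norm_one_add_mul_pow_le hq.le hw (i + 1)
  have hden : (1 - ‖q‖) ^ m ≤ ∏ i ∈ Finset.range m, ‖1 - q ^ (i + 1)‖ := by
    simpa using Finset.prod_le_prod (s := Finset.range m) (fun _ _ => (sub_pos.mpr hq).le)
      fun i _ => one_sub_norm_le_norm_one_sub_pow hq.le i
  rw [div_pow, mul_pow, mul_div_right_comm, coeff, norm_mul, norm_div, norm_prod, norm_prod,
    norm_pow]
  gcongr

lemma norm_term_le (hq : ‖q‖ < 1) {w : ℂ} {R : ℝ} (hw : ‖w‖ ≤ R) (m : ℕ) :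
    ‖term q w m‖ ≤
      (1 + R) * (((1 + R) * R / (1 - ‖q‖)) ^ m * ‖q‖ ^ (m * (3 * m + 1) / 2)) := by
  have hR : 0 ≤ 1 + R := by linarith [norm_nonneg w]
  rw [term, norm_mul, norm_mul, norm_pow, mul_comm]
  gcongr
  · exact norm_one_add_mul_pow_le hq.le hw _
  · exact norm_coeff_le hq hw m

lemma norm_antidiff_le (hq : ‖q‖ < 1) {w : ℂ} {R : ℝ} (hw : ‖w‖ ≤ R) (m : ℕ) :
    ‖antidiff q w m‖ ≤ 2 * (((1 + R) * R / (1 - ‖q‖)) ^ m * ‖q‖ ^ (m * (3 * m + 1) / 2)) := by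
  rw [antidiff, norm_mul, norm_mul, norm_pow, mul_comm]
  gcongr
  · simpa [sub_eq_add_neg, one_add_one_eq_two] using
      norm_one_add_mul_pow_le (w := -1) (R := 1) hq.le (by simp) m
  · exact norm_coeff_le hq hw m

lemma summable_term (hq : ‖q‖ < 1) (w : ℂ) : Summable (term q w) :=
  .of_norm_bounded ((summable_pow_mul_pow_pentagonal (norm_nonneg q) hq _).mul_left _)
    (norm_term_le hq le_rfl)

lemma summable_antidiff (hq : ‖q‖ < 1) (w : ℂ) : Summable (antidiff q w) :=
  .of_norm_bounded ((summable_pow_mul_pow_pentagonal (norm_nonneg q) hq _).mul_left _)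
    (norm_antidiff_le hq le_rfl)

lemma continuousOn_series (hq : ‖q‖ < 1) (R : ℝ) :
    ContinuousOn (series q) (Metric.closedBall 0 R) :=
  continuousOn_tsum (fun m => by unfold term coeff; fun_prop)
    ((summable_pow_mul_pow_pentagonal (norm_nonneg q) hq _).mul_left _)
    fun m w hw => norm_term_le hq (mem_closedBall_zero_iff.mp hw) m

lemma series_zero : series q 0 = 1 := by
  rw [series, tsum_eq_single 0 fun m hm => by simp [term, coeff, zero_pow hm]]
  simp [term, coeff]

lemma series_eq_mul_series (hq : ‖q‖ < 1) (w : ℂ) :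
    series q w = (1 + w * q) * series q (w * q) := by
  have hG := summable_antidiff hq w
  rw [← sub_eq_zero]
  calc series q w - (1 + w * q) * series q (w * q)
      = ∑' m, (term q w m - (1 + w * q) * term q (w * q) m) := by
        rw [series, series, ← tsum_mul_left,
          (summable_term hq w).tsum_sub ((summable_term hq (w * q)).mul_left _)]
    _ = ∑' m, (antidiff q w m - antidiff q w (m + 1)) :=
        tsum_congr (term_sub_mul_term_eq_antidiff_sub hq w)
    _ = antidiff q w 0 := by
        rw [hG.tsum_sub ((summable_nat_add_iff 1).mpr hG), hG.tsum_eq_zero_add,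
          add_sub_cancel_right]
    _ = 0 := by simp [antidiff]

lemma series_eq_prod_mul_series (hq : ‖q‖ < 1) (z : ℂ) (n : ℕ) :
    series q z = (∏ i ∈ Finset.range n, (1 + z * q ^ (i + 1))) * series q (z * q ^ n) := by
  induction n with
  | zero => simp
  | succ n ih =>
    rw [ih, series_eq_mul_series hq (z * q ^ n), Finset.prod_range_succ]
    ring_nf

lemma tendsto_series_mul_pow (hq : ‖q‖ < 1) (z : ℂ) :
    Tendsto (fun n => series q (z * q ^ n)) atTop (𝓝 1) := by
  have hcont : ContinuousAt (series q) 0 :=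
    (continuousOn_series hq 1).continuousAt (Metric.closedBall_mem_nhds 0 one_pos)
  have hzero : Tendsto (fun n => z * q ^ n) atTop (𝓝 0) := by
    simpa using (tendsto_pow_atTop_nhds_zero_of_norm_lt_one hq).const_mul z
  rw [← series_zero (q := q)]
  exact hcont.tendsto.comp hzero

lemma tendsto_prod_one_add_mul_pow (hq : ‖q‖ < 1) (z : ℂ) :
    Tendsto (fun n => ∏ i ∈ Finset.range n, (1 + z * q ^ (i + 1))) atTop (𝓝 (series q z)) := by
  have hlim := tendsto_series_mul_pow hq z
  have hquot : Tendsto (fun n => series q z / series q (z * q ^ n)) atTop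
      (𝓝 (series q z / 1)) := tendsto_const_nhds.div hlim one_ne_zero
  rw [div_one] at hquot
  refine hquot.congr' ?_
  filter_upwards [hlim.eventually_ne one_ne_zero] with n hn
  rw [div_eq_iff hn, ← series_eq_prod_mul_series hq]

lemma multipliable_one_add_mul_pow (hq : ‖q‖ < 1) (z : ℂ) :
    Multipliable fun i : ℕ => 1 + z * q ^ (i + 1) := by
  apply multipliable_one_add_of_summable
  simpa [norm_mul, norm_pow] using
    ((summable_nat_add_iff 1).mpr (summable_geometric_of_lt_one (norm_nonneg q) hq)).mul_left ‖z‖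

end Sylvester

/-- Sylvester's identity (Theorem 2.4, second form): for `|q| < 1`,
`(-zq;q)_∞ = ∑_{m=0}^∞ ((-zq;q)_m/(q;q)_m) z^m q^{m(3m+1)/2} (1 + z q^{2m+1})`. -/
theorem sylvester_identity_second_form (q z : ℂ) (hq : ‖q‖ < 1) :
    (∏' i : ℕ, (1 + z * q ^ (i + 1))) =
      ∑' m : ℕ,
        ((∏ i ∈ Finset.range m, (1 + z * q ^ (i + 1))) /
            (∏ i ∈ Finset.range m, (1 - q ^ (i + 1)))) *
          z ^ m * q ^ (m * (3 * m + 1) / 2) * (1 + z * q ^ (2 * m + 1)) :=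
  tendsto_nhds_unique (Sylvester.multipliable_one_add_mul_pow hq z).hasProd.tendsto_prod_nat
    (Sylvester.tendsto_prod_one_add_mul_pow hq z)
end

section
/- Euler's Pentagonal Number Theorem: for all complex q with |q| < 1, (q;q)_∞ = 1 + ∑_{m=1}^{∞} (-1)^m q^{m(3m-1)/2} (1 + q^m). -/
open Finset Filter Topology Complex

/-- Triangular numbers. -/
def pentTri : ℕ → ℕ
  | 0 => 0
  | n + 1 => pentTri n + (n + 1)

/-- Pentagonal numbers `n (3n - 1) / 2`. -/
def pentP : ℕ → ℕ
  | 0 => 0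
  | n + 1 => pentP n + (3 * n + 1)

lemma pentTri_succ (n : ℕ) : pentTri (n + 1) = pentTri n + (n + 1) := rfl

lemma pentP_succ (n : ℕ) : pentP (n + 1) = pentP n + (3 * n + 1) := rfl

lemma two_pentTri (n : ℕ) : 2 * pentTri n = n * (n + 1) := by
  induction n with
  | zero => rfl
  | succ n ih =>
    rw [pentTri_succ, Nat.mul_add, ih]
    ring

lemma two_pentP (n : ℕ) : 2 * pentP n + n = 3 * n * n := by
  induction n with
  | zero => rfl
  | succ n ih =>
    rw [pentP_succ, Nat.mul_add]
    have h : 3 * (n + 1) * (n + 1) = 3 * n * n + (6 * n + 3) := by ring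
    omega

lemma pentTri_ge (n : ℕ) : n ≤ pentTri n := by
  induction n with
  | zero => exact le_rfl
  | succ n ih => rw [pentTri_succ]; omega

lemma pentP_ge (n : ℕ) : n ≤ pentP n := by
  induction n with
  | zero => exact le_rfl
  | succ n ih => rw [pentP_succ]; omega

lemma pentP_eq_pentTri (n : ℕ) : pentP (n + 1) = pentTri (n + 1) + (n + 1) * n := by
  have h1 := two_pentTri (n + 1)
  have h2 := two_pentP (n + 1)
  have e1 : (n + 1) * (n + 1 + 1) = n * n + 3 * n + 2 := by ring
  have e2 : 3 * (n + 1) * (n + 1) = 3 * (n * n) + 6 * n + 3 := by ring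
  have e3 : (n + 1) * n = n * n + n := by ring
  linarith

lemma pentP_eq_div (m : ℕ) : pentP (m + 1) = (m + 1) * (3 * (m + 1) - 1) / 2 := by
  have h2 := two_pentP (m + 1)
  have he : 3 * (m + 1) - 1 = 3 * m + 2 := by omega
  rw [he]
  have h3 : (m + 1) * (3 * m + 2) + (m + 1) = 3 * (m + 1) * (m + 1) := by ring
  omega

/-- The `j`-th term in Shanks' finite sum. -/
noncomputable def pentA (q : ℂ) (n j : ℕ) : ℂ :=
  (-1) ^ j * q ^ (pentTri j + j * n) * ∏ i ∈ Finset.Ico (j + 1) (n + 1), (1 - q ^ i)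

/-- Auxiliary telescoping term. -/
noncomputable def pentB (q : ℂ) (n j : ℕ) : ℂ :=
  (-1) ^ j * q ^ (pentTri j + j * n) * ∏ i ∈ Finset.Ico j (n + 1), (1 - q ^ i)

lemma pentA_step (q : ℂ) (n j : ℕ) (hj : j ≤ n) :
    pentA q (n + 1) j = pentA q n j + (pentB q n (j + 1) - pentB q n j) := by
  unfold pentA pentB
  rw [Finset.prod_Ico_succ_top (Nat.succ_le_succ hj) (fun i => 1 - q ^ i),
    Finset.prod_eq_prod_Ico_succ_bot (Nat.lt_succ_of_le hj) (fun i => 1 - q ^ i)]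
  have e1 : pentTri j + j * (n + 1) = pentTri j + j * n + j := by ring
  have e2 : pentTri (j + 1) + (j + 1) * n = pentTri j + j * n + (n + j) + 1 := by
    rw [pentTri_succ]; ring
  rw [e1, e2]
  simp only [pow_add, pow_succ, pow_one]
  ring

/-- Shanks' finite form of the pentagonal number theorem. -/
lemma pent_shanks (q : ℂ) (n : ℕ) :
    ∑ j ∈ Finset.range (n + 1), pentA q n j =
      1 + ∑ j ∈ Finset.range n, ((-1 : ℂ) ^ (j + 1) * q ^ pentP (j + 1) * (1 + q ^ (j + 1))) := by
  induction n with
  | zero =>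
    simp [pentA, pentTri]
  | succ n ih =>
    rw [Finset.sum_range_succ]
    have h1 : ∑ j ∈ Finset.range (n + 1), pentA q (n + 1) j =
        ∑ j ∈ Finset.range (n + 1), (pentA q n j + (pentB q n (j + 1) - pentB q n j)) :=
      Finset.sum_congr rfl fun j hj =>
        pentA_step q n j (Nat.lt_succ_iff.mp (Finset.mem_range.mp hj))
    rw [h1, Finset.sum_add_distrib, Finset.sum_range_sub (fun j => pentB q n j), ih]
    have hB0 : pentB q n 0 = 0 := by
      unfold pentB
      rw [Finset.prod_eq_zero (Finset.mem_Ico.mpr ⟨le_rfl, n.succ_pos⟩) (by simp)]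
      ring
    have hBtop : pentB q n (n + 1) = (-1 : ℂ) ^ (n + 1) * q ^ pentP (n + 1) := by
      unfold pentB
      rw [Finset.Ico_self, Finset.prod_empty, pentP_eq_pentTri]
      ring
    have hAtop : pentA q (n + 1) (n + 1) =
        (-1 : ℂ) ^ (n + 1) * q ^ (pentP (n + 1) + (n + 1)) := by
      unfold pentA
      rw [Finset.Ico_self, Finset.prod_empty]
      have he : pentTri (n + 1) + (n + 1) * (n + 1) = pentP (n + 1) + (n + 1) := by
        have := pentP_eq_pentTri n
        have h3 : (n + 1) * (n + 1) = (n + 1) * n + (n + 1) := by ring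
        omega
      rw [he]
      ring
    rw [hB0, hBtop, hAtop, Finset.sum_range_succ]
    simp only [pow_add]
    ring

/-- Euler's Pentagonal Number Theorem: for `|q| < 1`,
`(q;q)_∞ = 1 + ∑_{m=1}^∞ (-1)^m q^{m(3m-1)/2} (1 + q^m)`.
(The series index is shifted: `m + 1` plays the role of `m ≥ 1`.) -/
theorem euler_pentagonal_number_theorem (q : ℂ) (hq : ‖q‖ < 1) :
    (∏' i : ℕ, (1 - q ^ (i + 1))) =
      1 + ∑' m : ℕ,
        (-1 : ℂ) ^ (m + 1) * q ^ ((m + 1) * (3 * (m + 1) - 1) / 2) *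
          (1 + q ^ (m + 1)) := by
  set r : ℝ := ‖q‖ with hrdef
  have hr : r < 1 := by rwa [hrdef]
  have hr0 : 0 ≤ r := norm_nonneg q
  have hinv0 : (0:ℝ) < 1 - r := by linarith
  set M : ℝ := Real.exp ((1 - r)⁻¹) with hMdef
  have hM0 : 0 < M := Real.exp_pos _
  have hgeom : Summable fun n : ℕ => r ^ n := summable_geometric_of_lt_one hr0 hr
  have hgeo_sum : ∀ s : Finset ℕ, ∑ i ∈ s, r ^ i ≤ (1 - r)⁻¹ := by
    intro s
    calc ∑ i ∈ s, r ^ i ≤ ∑' i : ℕ, r ^ i :=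
          Summable.sum_le_tsum s (fun i _ => pow_nonneg hr0 i) hgeom
      _ = (1 - r)⁻¹ := tsum_geometric_of_lt_one hr0 hr
  -- uniform bound on partial products
  have prodBound : ∀ s : Finset ℕ, ‖∏ i ∈ s, (1 - q ^ i)‖ ≤ M := by
    intro s
    calc ‖∏ i ∈ s, (1 - q ^ i)‖ = ∏ i ∈ s, ‖1 - q ^ i‖ := norm_prod s _
      _ ≤ ∏ i ∈ s, Real.exp (r ^ i) := by
          apply Finset.prod_le_prod (fun i _ => norm_nonneg _)
          intro i _
          calc ‖1 - q ^ i‖ ≤ ‖(1:ℂ)‖ + ‖q ^ i‖ := norm_sub_le _ _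
            _ = r ^ i + 1 := by rw [norm_one, norm_pow]; ring
            _ ≤ Real.exp (r ^ i) := Real.add_one_le_exp _
      _ = Real.exp (∑ i ∈ s, r ^ i) := (Real.exp_sum s _).symm
      _ ≤ M := Real.exp_le_exp.mpr (hgeo_sum s)
  -- nonvanishing of factors
  have hpowlt : ∀ m : ℕ, ‖q ^ (m + 1)‖ < 1 := by
    intro m
    rw [norm_pow]
    exact pow_lt_one₀ hr0 hr (Nat.succ_ne_zero m)
  have hne : ∀ m : ℕ, (1 : ℂ) - q ^ (m + 1) ≠ 0 := by
    intro m h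
    have h1 : q ^ (m + 1) = 1 := (sub_eq_zero.mp h).symm
    have := hpowlt m
    rw [h1, norm_one] at this
    exact lt_irrefl _ this
  -- summability of the logs
  have hrpow_le : ∀ m : ℕ, r ^ (m + 1) ≤ r := by
    intro m
    calc r ^ (m + 1) ≤ r ^ 1 := pow_le_pow_of_le_one hr0 hr.le (by omega)
      _ = r := pow_one r
  have hlog : Summable fun n : ℕ => Complex.log (1 - q ^ (n + 1)) := by
    apply Summable.of_norm_bounded (g := fun n => ((1 - r)⁻¹ / 2 + 1) * r ^ (n + 1))
    · apply Summable.congr ((hgeom.mul_left (((1 - r)⁻¹ / 2 + 1) * r)))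
      intro n
      rw [pow_succ]
      ring
    · intro n
      have hz : ‖-(q ^ (n + 1))‖ < 1 := by rw [norm_neg]; exact hpowlt n
      have h1 : (1 : ℂ) - q ^ (n + 1) = 1 + -(q ^ (n + 1)) := by ring
      rw [h1]
      refine le_trans (Complex.norm_log_one_add_le hz) ?_
      rw [norm_neg, norm_pow]
      set x : ℝ := r ^ (n + 1) with hxdef
      have hx0 : 0 ≤ x := pow_nonneg hr0 _
      have hxr : x ≤ r := hrpow_le n
      have hx1 : x < 1 := lt_of_le_of_lt hxr hr
      have hkey : x ^ 2 * (1 - x)⁻¹ ≤ x * (1 - r)⁻¹ := by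
        have h2 : (1 - x)⁻¹ ≤ (1 - r)⁻¹ := by
          apply inv_anti₀ hinv0
          linarith
        calc x ^ 2 * (1 - x)⁻¹ ≤ (1 * x) * (1 - r)⁻¹ := by
              apply mul_le_mul _ h2 (inv_nonneg.mpr (by linarith)) (by linarith)
              nlinarith
          _ = x * (1 - r)⁻¹ := by ring
      linarith
  -- the infinite product converges (HasProd)
  have hP : HasProd (fun i : ℕ => 1 - q ^ (i + 1))
      (Complex.exp (∑' n : ℕ, Complex.log (1 - q ^ (n + 1)))) := by
    have h := hlog.hasSum.cexp
    have heq : (Complex.exp ∘ fun n : ℕ => Complex.log (1 - q ^ (n + 1))) =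
        fun n : ℕ => 1 - q ^ (n + 1) :=
      funext fun n => Complex.exp_log (hne n)
    rwa [heq] at h
  -- summability of the pentagonal series
  have hcnorm : ∀ m : ℕ,
      ‖(-1 : ℂ) ^ (m + 1) * q ^ pentP (m + 1) * (1 + q ^ (m + 1))‖ ≤ 2 * r ^ (m + 1) := by
    intro m
    rw [norm_mul, norm_mul, norm_pow, norm_pow, norm_neg, norm_one, one_pow, one_mul]
    have h1 : r ^ pentP (m + 1) ≤ r ^ (m + 1) :=
      pow_le_pow_of_le_one hr0 hr.le (pentP_ge (m + 1))
    have h2 : ‖1 + q ^ (m + 1)‖ ≤ 2 := by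
      calc ‖1 + q ^ (m + 1)‖ ≤ ‖(1:ℂ)‖ + ‖q ^ (m + 1)‖ := norm_add_le _ _
        _ ≤ 1 + 1 := by
            rw [norm_one]
            exact add_le_add_right (le_of_lt (hpowlt m)) 1
        _ = 2 := by norm_num
    calc r ^ pentP (m + 1) * ‖1 + q ^ (m + 1)‖ ≤ r ^ (m + 1) * 2 :=
          mul_le_mul h1 h2 (norm_nonneg _) (pow_nonneg hr0 _)
      _ = 2 * r ^ (m + 1) := by ring
  have hS : Summable fun m : ℕ =>
      (-1 : ℂ) ^ (m + 1) * q ^ pentP (m + 1) * (1 + q ^ (m + 1)) := by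
    apply Summable.of_norm_bounded (g := fun m => 2 * r ^ (m + 1)) _ hcnorm
    apply Summable.congr (hgeom.mul_left (2 * r))
    intro n
    rw [pow_succ]
    ring
  set S : ℂ := ∑' m : ℕ, (-1 : ℂ) ^ (m + 1) * q ^ pentP (m + 1) * (1 + q ^ (m + 1)) with hSdef
  -- partial products in terms of Shanks' sum
  have hA0 : ∀ n : ℕ, pentA q n 0 = ∏ i ∈ Finset.range n, (1 - q ^ (i + 1)) := by
    intro n
    unfold pentA
    have h0 : pentTri 0 + 0 * n = 0 := by simp [pentTri]
    rw [h0, pow_zero, pow_zero, one_mul, one_mul, Finset.prod_Ico_eq_prod_range]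
    simp only [Nat.add_sub_cancel]
    exact Finset.prod_congr rfl fun i _ => by rw [add_comm 1 i]
  have hsplit : ∀ n : ℕ, (∏ i ∈ Finset.range n, (1 - q ^ (i + 1))) =
      (∑ j ∈ Finset.range (n + 1), pentA q n j) - ∑ k ∈ Finset.range n, pentA q n (k + 1) := by
    intro n
    rw [Finset.sum_range_succ' (fun j => pentA q n j) n, hA0 n]
    ring
  -- L tends to 1 + S
  have hL : Tendsto (fun n : ℕ => ∑ j ∈ Finset.range (n + 1), pentA q n j)
      atTop (𝓝 (1 + S)) := by
    have h1 : Tendsto (fun n : ℕ => ∑ j ∈ Finset.range n,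
        ((-1 : ℂ) ^ (j + 1) * q ^ pentP (j + 1) * (1 + q ^ (j + 1)))) atTop (𝓝 S) :=
      hS.hasSum.tendsto_sum_nat
    have h2 := (tendsto_const_nhds (x := (1:ℂ)) (f := atTop)).add h1
    apply h2.congr
    intro n
    exact (pent_shanks q n).symm
  -- remainder tends to 0
  have hRem : Tendsto (fun n : ℕ => ∑ k ∈ Finset.range n, pentA q n (k + 1))
      atTop (𝓝 0) := by
    rw [tendsto_zero_iff_norm_tendsto_zero]
    have hbound : ∀ n : ℕ, ‖∑ k ∈ Finset.range n, pentA q n (k + 1)‖ ≤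
        M * (1 - r)⁻¹ * r ^ (n + 1) := by
      intro n
      have hterm : ∀ k : ℕ, k ∈ Finset.range n →
          ‖pentA q n (k + 1)‖ ≤ M * (r ^ (n + 1) * r ^ k) := by
        intro k _
        have hAnorm : ‖pentA q n (k + 1)‖ =
            r ^ (pentTri (k + 1) + (k + 1) * n) *
              ‖∏ i ∈ Finset.Ico (k + 2) (n + 1), (1 - q ^ i)‖ := by
          unfold pentA
          rw [norm_mul, norm_mul, norm_pow, norm_pow, norm_neg, norm_one, one_pow, one_mul]
        have hexp : n + 1 + k ≤ pentTri (k + 1) + (k + 1) * n := by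
          have h1 := pentTri_ge (k + 1)
          have h2 : (k + 1) * n = k * n + n := by ring
          have h3 : 0 ≤ k * n := Nat.zero_le _
          omega
        have hple : r ^ (pentTri (k + 1) + (k + 1) * n) ≤ r ^ (n + 1 + k) :=
          pow_le_pow_of_le_one hr0 hr.le hexp
        calc ‖pentA q n (k + 1)‖ ≤ r ^ (n + 1 + k) * M := by
              rw [hAnorm]
              exact mul_le_mul hple (prodBound _) (norm_nonneg _) (pow_nonneg hr0 _)
          _ = M * (r ^ (n + 1) * r ^ k) := by rw [pow_add]; ring
      calc ‖∑ k ∈ Finset.range n, pentA q n (k + 1)‖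
          ≤ ∑ k ∈ Finset.range n, ‖pentA q n (k + 1)‖ := norm_sum_le _ _
        _ ≤ ∑ k ∈ Finset.range n, M * (r ^ (n + 1) * r ^ k) := Finset.sum_le_sum hterm
        _ = M * r ^ (n + 1) * ∑ k ∈ Finset.range n, r ^ k := by
            rw [Finset.mul_sum]
            exact Finset.sum_congr rfl fun k _ => by ring
        _ ≤ M * r ^ (n + 1) * (1 - r)⁻¹ := by
            apply mul_le_mul_of_nonneg_left (hgeo_sum _) (by positivity)
        _ = M * (1 - r)⁻¹ * r ^ (n + 1) := by ring
    have htend : Tendsto (fun n : ℕ => M * (1 - r)⁻¹ * r ^ (n + 1)) atTop (𝓝 0) := by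
      have h1 : Tendsto (fun n : ℕ => r ^ n) atTop (𝓝 0) :=
        tendsto_pow_atTop_nhds_zero_of_lt_one hr0 hr
      have h2 : Tendsto (fun n : ℕ => r ^ (n + 1)) atTop (𝓝 0) :=
        h1.comp (tendsto_add_atTop_nat 1)
      have h3 := h2.const_mul (M * (1 - r)⁻¹)
      simpa using h3
    exact squeeze_zero (fun n => norm_nonneg _) hbound htend
  -- combine the limits
  have hprodTendsto : Tendsto (fun n : ℕ => ∏ i ∈ Finset.range n, (1 - q ^ (i + 1)))
      atTop (𝓝 (1 + S)) := by
    have h := hL.sub hRem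
    rw [sub_zero] at h
    apply h.congr
    intro n
    exact (hsplit n).symm
  have htp := hP.tendsto_prod_nat
  have hkey : Complex.exp (∑' n : ℕ, Complex.log (1 - q ^ (n + 1))) = 1 + S :=
    tendsto_nhds_unique htp hprodTendsto
  have hfinal : (∏' i : ℕ, (1 - q ^ (i + 1))) = 1 + S := by
    rw [hP.tprod_eq, hkey]
  rw [hfinal, hSdef]
  congr 1
  apply tsum_congr
  intro m
  rw [pentP_eq_div m]
end

section
/- Fix a positive integer m. For all complex q, z with |q| < 1, the sum of z^{|S|} q^{Σ_{s∈S} s} over all finite subsets S of the positive integers satisfying b_S(m−1) = m and b_S(m) = m − 1 equals ((-zq;q)_{m-1}/(q;q)_{m-1}) z^m q^{m(3m-1)/2}. -/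
/-!
A set `S` with `b_S(m - 1) = m` and `b_S(m) = m - 1` is exactly `T ∪ {m} ∪ U` with
`T ⊆ [1, m - 1]` arbitrary and `U` an `(m - 1)`-subset of `(m, ∞)`. Its weight factors, so the sum
is `∏_{i < m} (1 + z q^i) · z q^m · z^(m-1) G_{m-1}(m)`, where `G_k(m)` sums `q^(Σ U)` over the
`k`-subsets `U` of `(m, ∞)`. Splitting on whether `m + 1 ∈ U`, and shifting `U` down by one, gives
`G_{k+1}(m) = q^(m+1) G_k(m+1) + G_{k+1}(m+1)` and `G_k(m+1) = q^k G_k(m)`, whence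
`(q;q)_k G_k(m) = q^(k m + (k+1 choose 2))`.
-/

open Finset

section GeneratingFunction

variable {𝕜 : Type*} [NormedField 𝕜]

lemma summable_norm_pow_sum_pnat {q : 𝕜} (hq : ‖q‖ < 1) :
    Summable (fun U : Finset ℕ+ => ‖q ^ ∑ s ∈ U, (s : ℕ)‖) := by
  have hgeo : Summable (fun s : ℕ+ => ‖q‖ ^ (s : ℕ)) :=
    (summable_geometric_of_lt_one (norm_nonneg q) hq).comp_injective PNat.coe_injective
  refine (summable_finsetProd_of_summable_nonneg (fun _ => by positivity) hgeo).congr fun U => ?_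
  rw [prod_pow_eq_pow_sum, norm_pow]

def powersetCardIoi (k m : ℕ) : Set (Finset ℕ+) := {U | U.card = k ∧ ∀ s ∈ U, m < (s : ℕ)}

lemma map_addRightEmbedding_image_powersetCardIoi (k m : ℕ) :
    map (addRightEmbedding 1) '' powersetCardIoi k m = powersetCardIoi k (m + 1) := by
  ext V
  constructor
  · rintro ⟨U, ⟨hcard, hmem⟩, rfl⟩
    refine ⟨by simpa using hcard, fun t ht => ?_⟩
    obtain ⟨s, hs, rfl⟩ := mem_map.1 ht
    simpa using hmem s hs
  · rintro ⟨hcard, hmem⟩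
    have hgt : ∀ v ∈ V, 1 < v := fun v hv => by
      have := hmem v hv
      exact_mod_cast (by omega : 1 < (v : ℕ))
    have hsub : ∀ v ∈ V, v - 1 + 1 = v := fun v hv => PNat.sub_add_of_lt (hgt v hv)
    refine ⟨V.image (· - 1), ⟨?_, fun s hs => ?_⟩, ?_⟩
    · rw [card_image_of_injOn, hcard]
      intro a ha b hb hab
      rw [← hsub a ha, ← hsub b hb]
      exact congrArg (· + 1) hab
    · obtain ⟨v, hv, rfl⟩ := mem_image.1 hs
      have := hmem v hv
      rw [PNat.sub_coe, if_pos (hgt v hv), PNat.one_coe]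
      omega
    · show map _ _ = V
      rw [map_eq_image, image_image]
      exact (image_congr hsub).trans image_id

lemma succPNat_notMem_of_mem_powersetCardIoi {k m : ℕ} {U : Finset ℕ+}
    (hU : U ∈ powersetCardIoi k (m + 1)) : m.succPNat ∉ U :=
  fun h => by simpa using hU.2 _ h

lemma powersetCardIoi_succ (k m : ℕ) :
    powersetCardIoi (k + 1) m =
      insert m.succPNat '' powersetCardIoi k (m + 1) ∪ powersetCardIoi (k + 1) (m + 1) := by
  ext U
  constructor
  · rintro ⟨hcard, hmem⟩
    by_cases hp : m.succPNat ∈ U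
    · refine Or.inl ⟨U.erase m.succPNat,
        ⟨by simp [card_erase_of_mem hp, hcard], fun s hs => ?_⟩, insert_erase hp⟩
      have hne : (s : ℕ) ≠ m + 1 := fun h =>
        ne_of_mem_erase hs (PNat.coe_injective (by simpa using h))
      have := hmem s (mem_of_mem_erase hs)
      omega
    · refine Or.inr ⟨hcard, fun s hs => ?_⟩
      have hne : (s : ℕ) ≠ m + 1 := fun h =>
        hp ((PNat.coe_injective (by simpa using h) : s = m.succPNat) ▸ hs)
      have := hmem s hs
      omega
  · rintro (⟨V, hV, rfl⟩ | ⟨hcard, hmem⟩)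
    · refine ⟨by rw [card_insert_of_notMem (succPNat_notMem_of_mem_powersetCardIoi hV), hV.1], ?_⟩
      simp only [mem_insert, forall_eq_or_imp, Nat.succPNat_coe]
      exact ⟨Nat.lt_succ_self m, fun s hs => (hV.2 s hs).trans' (Nat.lt_succ_self m)⟩
    · exact ⟨hcard, fun s hs => (hmem s hs).trans' (Nat.lt_succ_self m)⟩

noncomputable def gfPowersetCardIoi (q : 𝕜) (k m : ℕ) : 𝕜 :=
  ∑' U : powersetCardIoi k m, q ^ ∑ s ∈ (U : Finset ℕ+), (s : ℕ)

lemma gfPowersetCardIoi_add_one (q : 𝕜) (k m : ℕ) :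
    gfPowersetCardIoi q k (m + 1) = q ^ k * gfPowersetCardIoi q k m := by
  rw [gfPowersetCardIoi, ← map_addRightEmbedding_image_powersetCardIoi,
    tsum_image (fun U : Finset ℕ+ => q ^ ∑ s ∈ U, (s : ℕ)) (map_injective _).injOn,
    gfPowersetCardIoi, ← tsum_mul_left]
  refine tsum_congr fun U => ?_
  rw [sum_map, ← pow_add]
  simp [sum_add_distrib, U.2.1, add_comm]

lemma gfPowersetCardIoi_succ [CompleteSpace 𝕜] {q : 𝕜} (hq : ‖q‖ < 1) (k m : ℕ) :
    gfPowersetCardIoi q (k + 1) m =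
      q ^ (m + 1) * gfPowersetCardIoi q k (m + 1) + gfPowersetCardIoi q (k + 1) (m + 1) := by
  have hsum := (summable_norm_pow_sum_pnat hq).of_norm
  have hdisj : Disjoint (insert m.succPNat '' powersetCardIoi k (m + 1))
      (powersetCardIoi (k + 1) (m + 1)) :=
    Set.disjoint_left.2 fun _ ⟨V, _, hV⟩ hU =>
      succPNat_notMem_of_mem_powersetCardIoi hU (hV ▸ mem_insert_self _ V)
  have hinj : Set.InjOn (insert m.succPNat) (powersetCardIoi k (m + 1)) := fun V hV V' hV' h => by
    rw [← erase_insert (succPNat_notMem_of_mem_powersetCardIoi hV),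
      ← erase_insert (succPNat_notMem_of_mem_powersetCardIoi hV'), h]
  rw [gfPowersetCardIoi, powersetCardIoi_succ,
    (hsum.subtype _).tsum_union_disjoint hdisj (hsum.subtype _),
    tsum_image (fun U : Finset ℕ+ => q ^ ∑ s ∈ U, (s : ℕ)) hinj, gfPowersetCardIoi,
    gfPowersetCardIoi, ← tsum_mul_left]
  congr 1
  refine tsum_congr fun V => ?_
  rw [sum_insert (succPNat_notMem_of_mem_powersetCardIoi V.2), pow_add, Nat.succPNat_coe]

lemma prod_one_sub_pow_ne_zero {q : 𝕜} (hq : ‖q‖ < 1) (k : ℕ) :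
    ∏ i ∈ range k, (1 - q ^ (i + 1)) ≠ 0 :=
  prod_ne_zero_iff.2 fun i _ h => by
    have : ‖q ^ (i + 1)‖ < 1 := by
      rw [norm_pow]
      exact pow_lt_one₀ (norm_nonneg q) hq i.succ_ne_zero
    rw [← sub_eq_zero.1 h, norm_one] at this
    exact this.false

lemma prod_one_sub_pow_mul_gfPowersetCardIoi [CompleteSpace 𝕜] {q : 𝕜} (hq : ‖q‖ < 1)
    (k m : ℕ) :
    (∏ i ∈ range k, (1 - q ^ (i + 1))) * gfPowersetCardIoi q k m =
      q ^ (k * m + (k + 1).choose 2) := by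
  induction k generalizing m with
  | zero =>
    have : powersetCardIoi 0 m = {∅} := by
      ext U
      simp +contextual [powersetCardIoi, card_eq_zero]
    rw [gfPowersetCardIoi, this]
    simp
  | succ k ih =>
    have hrec : (1 - q ^ (k + 1)) * gfPowersetCardIoi q (k + 1) m =
        q ^ (m + 1) * gfPowersetCardIoi q k (m + 1) := by
      linear_combination gfPowersetCardIoi_succ hq k m + gfPowersetCardIoi_add_one q (k + 1) m
    have hexp : (k + 1) * m + (k + 1 + 1).choose 2 =
        m + 1 + (k * (m + 1) + (k + 1).choose 2) := by
      rw [Nat.choose_succ_succ', Nat.choose_one_right]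
      ring
    rw [prod_range_succ, mul_assoc, hrec, hexp, pow_add q (m + 1), ← ih (m + 1)]
    ring

theorem gfPowersetCardIoi_eq [CompleteSpace 𝕜] {q : 𝕜} (hq : ‖q‖ < 1) (k m : ℕ) :
    gfPowersetCardIoi q k m =
      q ^ (k * m + (k + 1).choose 2) / ∏ i ∈ range k, (1 - q ^ (i + 1)) := by
  rw [eq_div_iff (prod_one_sub_pow_ne_zero hq k), mul_comm,
    prod_one_sub_pow_mul_gfPowersetCardIoi hq]

end GeneratingFunction

section CaseTwo

/-- The paper's `b_S(m)`. -/
def countAbove (S : Finset ℕ+) (m : ℕ) : ℕ := #(S.filter fun s : ℕ+ => m < (s : ℕ))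

lemma mem_of_countAbove_pred_ne {S : Finset ℕ+} {m : ℕ} (hm : 0 < m)
    (h : countAbove S (m - 1) ≠ countAbove S m) : m.toPNat hm ∈ S := by
  contrapose! h
  refine congrArg card (filter_congr fun s hs => ⟨fun hlt => ?_, fun hlt => by omega⟩)
  have : (s : ℕ) ≠ m := fun he => h (PNat.eq (n := m.toPNat hm) he ▸ hs)
  omega

lemma insert_filter_lt_union_filter_gt {S : Finset ℕ+} {m : ℕ} (hm : 0 < m)
    (h : m.toPNat hm ∈ S) :
    insert (m.toPNat hm)
      (S.filter (fun s : ℕ+ => (s : ℕ) < m) ∪ S.filter (fun s : ℕ+ => m < (s : ℕ))) = S := by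
  ext s
  have hsm : s = m.toPNat hm ↔ (s : ℕ) = m := PNat.coe_inj.symm
  rw [mem_insert, mem_union, mem_filter, mem_filter, hsm]
  rcases lt_trichotomy (s : ℕ) m with hlt | heq | hgt
  · simp [hlt, hlt.ne, hlt.not_gt]
  · obtain rfl := hsm.2 heq
    simp [h, heq]
  · simp [hgt, hgt.ne', hgt.not_gt]

def pnatIio (m : ℕ) : Finset ℕ+ := (range (m - 1)).map ⟨Nat.succPNat, Nat.succPNat_injective⟩

lemma mem_pnatIio {m : ℕ} {s : ℕ+} : s ∈ pnatIio m ↔ (s : ℕ) < m := by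
  simp only [pnatIio, mem_map, mem_range, Function.Embedding.coeFn_mk]
  constructor
  · rintro ⟨i, hi, rfl⟩
    rw [Nat.succPNat_coe]
    omega
  · intro hs
    refine ⟨s.natPred, ?_, PNat.succPNat_natPred s⟩
    rw [← Nat.succ_lt_succ_iff, ← Nat.succPNat_coe, PNat.succPNat_natPred]
    omega

section Split

variable {m : ℕ} (hm : 0 < m) {T U : Finset ℕ+}

lemma mem_insert_union_iff (hT : T ⊆ pnatIio m) (hU : ∀ s ∈ U, m < (s : ℕ)) (s : ℕ+) :
    s ∈ insert (m.toPNat hm) (T ∪ U) ↔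
      (s : ℕ) < m ∧ s ∈ T ∨ (s : ℕ) = m ∨ m < (s : ℕ) ∧ s ∈ U := by
  have hTs : s ∈ T → (s : ℕ) < m := fun h => mem_pnatIio.1 (hT h)
  have hsm : s = m.toPNat hm ↔ (s : ℕ) = m := PNat.coe_inj.symm
  rw [mem_insert, mem_union, hsm]
  grind

lemma filter_lt_insert_union (hT : T ⊆ pnatIio m) (hU : ∀ s ∈ U, m < (s : ℕ)) :
    (insert (m.toPNat hm) (T ∪ U)).filter (fun s : ℕ+ => (s : ℕ) < m) = T := by
  ext s
  have hTs : s ∈ T → (s : ℕ) < m := fun h => mem_pnatIio.1 (hT h)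
  rw [mem_filter, mem_insert_union_iff hm hT hU]
  grind

lemma filter_gt_insert_union (hT : T ⊆ pnatIio m) (hU : ∀ s ∈ U, m < (s : ℕ)) :
    (insert (m.toPNat hm) (T ∪ U)).filter (fun s : ℕ+ => m < (s : ℕ)) = U := by
  ext s
  have hUs := hU s
  rw [mem_filter, mem_insert_union_iff hm hT hU]
  grind

lemma filter_pred_lt_insert_union (hT : T ⊆ pnatIio m) (hU : ∀ s ∈ U, m < (s : ℕ)) :
    (insert (m.toPNat hm) (T ∪ U)).filter (fun s : ℕ+ => m - 1 < (s : ℕ)) =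
      insert (m.toPNat hm) U := by
  ext s
  have hUs := hU s
  have hsm : s = m.toPNat hm ↔ (s : ℕ) = m := PNat.coe_inj.symm
  rw [mem_filter, mem_insert_union_iff hm hT hU, mem_insert, hsm]
  grind

end Split

def caseTwoEquiv {m : ℕ} (hm : 0 < m) :
    (pnatIio m).powerset × powersetCardIoi (m - 1) m ≃
      {S : Finset ℕ+ // countAbove S (m - 1) = m ∧ countAbove S m = m - 1} where
  toFun x := ⟨insert (m.toPNat hm) (x.1 ∪ x.2.1), by
    obtain ⟨⟨T, hT⟩, ⟨U, hUcard, hU⟩⟩ := x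
    have hT := mem_powerset.1 hT
    refine ⟨?_, by rw [countAbove, filter_gt_insert_union hm hT hU, hUcard]⟩
    rw [countAbove, filter_pred_lt_insert_union hm hT hU,
      card_insert_of_notMem (fun h => (hU _ h).false), hUcard]
    omega⟩
  invFun S :=
    (⟨S.1.filter (fun s : ℕ+ => (s : ℕ) < m),
      mem_powerset.2 fun s hs => mem_pnatIio.2 (mem_filter.1 hs).2⟩,
    ⟨S.1.filter (fun s : ℕ+ => m < (s : ℕ)), S.2.2, fun s hs => (mem_filter.1 hs).2⟩)
  left_inv := by
    rintro ⟨⟨T, hT⟩, ⟨U, hU⟩⟩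
    have hT := mem_powerset.1 hT
    ext1
    · exact Subtype.ext (filter_lt_insert_union hm hT hU.2)
    · exact Subtype.ext (filter_gt_insert_union hm hT hU.2)
  right_inv := by
    rintro ⟨S, hS⟩
    have hmS := mem_of_countAbove_pred_ne hm (by rw [hS.1, hS.2]; omega)
    exact Subtype.ext (insert_filter_lt_union_filter_gt hm hmS)

lemma prod_caseTwoEquiv_apply {M : Type*} [CommMonoid M] {m : ℕ} (hm : 0 < m) (z q : M)
    (x : (pnatIio m).powerset × powersetCardIoi (m - 1) m) :
    ∏ s ∈ (caseTwoEquiv hm x : Finset ℕ+), z * q ^ (s : ℕ) =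
      z * q ^ m * (∏ s ∈ x.1.1, z * q ^ (s : ℕ)) * (z ^ (m - 1) * q ^ ∑ s ∈ x.2.1, (s : ℕ)) := by
  obtain ⟨⟨T, hT⟩, ⟨U, hUcard, hU⟩⟩ := x
  have hT := mem_powerset.1 hT
  have hdisj : Disjoint T U := disjoint_left.2 fun s hsT hsU =>
    (hU s hsU).not_gt (mem_pnatIio.1 (hT hsT))
  have hnot : m.toPNat hm ∉ T ∪ U := fun h => by
    rcases mem_union.1 h with h | h
    · exact (mem_pnatIio.1 (hT h)).false
    · exact (hU _ h).false
  show ∏ s ∈ insert (m.toPNat hm) (T ∪ U), z * q ^ (s : ℕ) =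
    z * q ^ m * (∏ s ∈ T, z * q ^ (s : ℕ)) * (z ^ (m - 1) * q ^ ∑ s ∈ U, (s : ℕ))
  rw [prod_insert hnot, prod_union hdisj, prod_mul_distrib (s := U), prod_const, hUcard,
    prod_pow_eq_pow_sum]
  simp only [Nat.toPNat, PNat.mk_coe, mul_assoc]

lemma tsum_prod_caseTwo {𝕜 : Type*} [NormedField 𝕜] [CompleteSpace 𝕜] {m : ℕ} (hm : 0 < m)
    {q : 𝕜} (hq : ‖q‖ < 1) (z : 𝕜) :
    ∑' S : {S : Finset ℕ+ // countAbove S (m - 1) = m ∧ countAbove S m = m - 1},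
        ∏ s ∈ (S : Finset ℕ+), z * q ^ (s : ℕ) =
      z * q ^ m * (∏ s ∈ pnatIio m, (1 + z * q ^ (s : ℕ))) *
        (z ^ (m - 1) * gfPowersetCardIoi q (m - 1) m) := by
  have hsum : Summable fun U : powersetCardIoi (m - 1) m =>
      ‖z ^ (m - 1) * q ^ ∑ s ∈ (U : Finset ℕ+), (s : ℕ)‖ := by
    simp_rw [norm_mul]
    exact ((summable_norm_pow_sum_pnat hq).subtype _).mul_left _
  rw [← (caseTwoEquiv hm).tsum_eq, tsum_congr (prod_caseTwoEquiv_apply hm z q),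
    ← tsum_mul_tsum_of_summable_norm (f := fun T : (pnatIio m).powerset =>
      z * q ^ m * ∏ s ∈ (T : Finset ℕ+), z * q ^ (s : ℕ)) Summable.of_finite hsum,
    tsum_fintype, tsum_mul_left, gfPowersetCardIoi, prod_one_add, mul_sum,
    sum_coe_sort (pnatIio m).powerset fun T => z * q ^ m * ∏ s ∈ T, z * q ^ (s : ℕ)]

end CaseTwo

lemma add_pred_mul_add_choose_two {m : ℕ} (hm : 0 < m) :
    m + ((m - 1) * m + m.choose 2) = m * (3 * m - 1) / 2 := by
  obtain ⟨n, rfl⟩ : ∃ n, m = n + 1 := ⟨m - 1, by omega⟩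
  have h : (n + 1) * (3 * (n + 1) - 1) = (n + 1) * n + 2 * ((n + 1) * (n + 1)) := by
    rw [show 3 * (n + 1) - 1 = 3 * n + 2 by omega]
    ring
  rw [Nat.choose_two_right, Nat.add_sub_cancel, h, Nat.add_mul_div_left _ _ two_pos]
  ring

/-- Generating function for rank-`m` tilings with `b(m-1) = m` and `b(m) = m-1`:
the sum of `z^|S| q^(Σ_{s∈S} s)` over such finite subsets `S` of `ℤ_{>0}` is
`((-zq;q)_{m-1}/(q;q)_{m-1}) z^m q^{m(3m-1)/2}`. -/
theorem rank_m_case_two_generating_function (m : ℕ) (hm : 0 < m)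
    (q z : ℂ) (hq : ‖q‖ < 1) :
    (∑' S : {S : Finset ℕ+ //
        (S.filter (fun s : ℕ+ => m - 1 < (s : ℕ))).card = m ∧
        (S.filter (fun s : ℕ+ => m < (s : ℕ))).card = m - 1},
      z ^ (S : Finset ℕ+).card * q ^ (∑ s ∈ (S : Finset ℕ+), (s : ℕ))) =
    ((∏ i ∈ Finset.range (m - 1), (1 + z * q ^ (i + 1))) /
        (∏ i ∈ Finset.range (m - 1), (1 - q ^ (i + 1)))) *
      z ^ m * q ^ (m * (3 * m - 1) / 2) := by
  have hpnatIio : ∏ s ∈ pnatIio m, (1 + z * q ^ (s : ℕ)) =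
      ∏ i ∈ range (m - 1), (1 + z * q ^ (i + 1)) :=
    prod_map _ _ _
  have hz : z ^ m = z * z ^ (m - 1) := by rw [← pow_succ', Nat.sub_add_cancel hm]
  calc _ = ∑' S : {S : Finset ℕ+ // countAbove S (m - 1) = m ∧ countAbove S m = m - 1},
        ∏ s ∈ (S : Finset ℕ+), z * q ^ (s : ℕ) :=
        tsum_congr fun S => by rw [prod_mul_distrib, prod_const, prod_pow_eq_pow_sum]
    _ = _ := tsum_prod_caseTwo hm hq z
    _ = _ := by
      rw [hpnatIio, gfPowersetCardIoi_eq hq, Nat.sub_add_cancel hm,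
        ← add_pred_mul_add_choose_two hm, pow_add, pow_add, hz]
      ring
end

section
/- Fix a positive integer m. For all complex q, z with |q| < 1, the sum of z^{|S|} q^{Σ_{s∈S} s} over all finite subsets S of the positive integers satisfying b_S(m) = m equals ((-zq;q)_m/(q;q)_m) z^m q^{m(3m+1)/2}. -/
/-!
A set `S` with `b_S(m) = m` splits uniquely into an arbitrary subset of `{1, …, m}`, contributing
`∏ (1 + z qⁱ) = (-zq;q)_m`, and `m + 1 + B` for an `m`-subset `B` of `ℕ`, contributing
`z^m q^(m(m+1)) q^(ΣB)`. Removing the minimum `k` of an `(m+1)`-subset of `ℕ` and lowering the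
remaining elements by `k + 1` leaves an `m`-subset and lowers the sum by `k + m(k+1)`, so
`Σ_{|B| = m+1} q^(ΣB) = q^m / (1 - q^(m+1)) · Σ_{|B| = m} q^(ΣB)`, whence
`Σ_{|B| = m} q^(ΣB) = q^(m choose 2) / (q;q)_m`.
-/

open Finset Set.powersetCard

def shiftInsert (k : ℕ) (B : Finset ℕ) : Finset ℕ :=
  insert k (B.map (addLeftEmbedding (k + 1)))

section shiftInsert

variable (k : ℕ) (B : Finset ℕ)

lemma notMem_map_addLeftEmbedding_succ : k ∉ B.map (addLeftEmbedding (k + 1)) := by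
  simp only [mem_map, addLeftEmbedding_apply, not_exists, not_and]
  omega

lemma card_shiftInsert : #(shiftInsert k B) = #B + 1 := by
  rw [shiftInsert, card_insert_of_notMem (notMem_map_addLeftEmbedding_succ k B), card_map]

lemma sum_shiftInsert : ∑ x ∈ shiftInsert k B, x = k + #B * (k + 1) + ∑ b ∈ B, b := by
  rw [shiftInsert, sum_insert (notMem_map_addLeftEmbedding_succ k B), sum_map]
  simp only [addLeftEmbedding_apply]
  rw [sum_add_distrib, sum_const, smul_eq_mul]
  ring

lemma min'_shiftInsert : (shiftInsert k B).min' (insert_nonempty _ _) = k := by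
  refine le_antisymm (min'_le _ _ (mem_insert_self _ _)) (le_min' _ _ _ fun x hx => ?_)
  rcases mem_insert.1 hx with rfl | hx
  · exact le_rfl
  · obtain ⟨b, -, rfl⟩ := mem_map.1 hx
    simp only [addLeftEmbedding_apply]
    omega

lemma image_sub_erase_shiftInsert :
    ((shiftInsert k B).erase k).image (· - (k + 1)) = B := by
  rw [shiftInsert, erase_insert (notMem_map_addLeftEmbedding_succ k B), map_eq_image,
    image_image]
  simp [Function.comp_def]

end shiftInsert

lemma shiftInsert_image_sub_erase {S : Finset ℕ} {k : ℕ} (hk : k ∈ S)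
    (hmin : ∀ x ∈ S, k ≤ x) :
    shiftInsert k ((S.erase k).image (· - (k + 1))) = S := by
  rw [shiftInsert, map_eq_image, image_image]
  conv_rhs => rw [← insert_erase hk]
  congr 1
  refine (image_congr fun x hx => ?_).trans image_id
  have := hmin x (mem_of_mem_erase hx)
  have := ne_of_mem_erase hx
  simp only [Function.comp_apply, addLeftEmbedding_apply, id]
  omega

lemma Set.powersetCard.nonempty_of_succ {α : Type*} {n : ℕ} (S : Set.powersetCard α (n + 1)) :
    (S : Finset α).Nonempty :=
  card_pos.1 (by rw [card_eq]; omega)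

def shiftInsertEquiv (m : ℕ) :
    ℕ × Set.powersetCard ℕ m ≃ Set.powersetCard ℕ (m + 1) where
  toFun p := ⟨shiftInsert p.1 p.2, by rw [mem_iff, card_shiftInsert, card_eq]⟩
  invFun S :=
    let k := (S : Finset ℕ).min' (nonempty_of_succ S)
    (k, ⟨((S : Finset ℕ).erase k).image (· - (k + 1)), by
      have := card_shiftInsert k (((S : Finset ℕ).erase k).image (· - (k + 1)))
      rw [shiftInsert_image_sub_erase (min'_mem _ _) (fun x hx => min'_le _ _ hx), card_eq] at this
      exact mem_iff.2 (by omega)⟩)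
  left_inv p := by
    ext
    · exact min'_shiftInsert _ _
    · simp only [min'_shiftInsert, image_sub_erase_shiftInsert]
  right_inv S := Subtype.ext <|
    shiftInsert_image_sub_erase (min'_mem _ (nonempty_of_succ S)) fun x hx => min'_le _ _ hx

lemma pow_sum_shiftInsertEquiv {M : Type*} [Monoid M] (q : M) (m : ℕ)
    (p : ℕ × Set.powersetCard ℕ m) :
    q ^ ∑ x ∈ (shiftInsertEquiv m p : Finset ℕ), x
      = (q ^ (m + 1)) ^ p.1 * (q ^ m * q ^ ∑ b ∈ (p.2 : Finset ℕ), b) := by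
  change q ^ ∑ x ∈ shiftInsert p.1 p.2, x = _
  rw [sum_shiftInsert, card_eq, ← pow_mul, ← pow_add, ← pow_add]
  congr 1
  ring

theorem summable_norm_and_hasSum_pow_sum_powersetCard {K : Type*} [NormedField K]
    [CompleteSpace K] {q : K} (hq : ‖q‖ < 1) (m : ℕ) :
    (Summable fun B : Set.powersetCard ℕ m => ‖q ^ ∑ b ∈ (B : Finset ℕ), b‖) ∧
      HasSum (fun B : Set.powersetCard ℕ m => q ^ ∑ b ∈ (B : Finset ℕ), b)
        (q ^ m.choose 2 / ∏ i ∈ range m, (1 - q ^ (i + 1))) := by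
  induction m with
  | zero =>
    have : Subsingleton (Set.powersetCard ℕ 0) :=
      ⟨fun S T => Subtype.ext <| by rw [card_eq_zero.1 (card_eq S), card_eq_zero.1 (card_eq T)]⟩
    refine ⟨.of_finite, ?_⟩
    convert hasSum_single (⟨∅, mem_iff.2 rfl⟩ : Set.powersetCard ℕ 0)
      fun S hS => absurd (Subsingleton.elim _ _) hS
    simp
  | succ m ih =>
    obtain ⟨hnorm, hsum⟩ := ih
    have hqm : ‖q ^ (m + 1)‖ < 1 := by
      rw [norm_pow]
      exact pow_lt_one₀ (norm_nonneg q) hq (Nat.succ_ne_zero m)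
    -- naming the factors avoids a costly higher-order unification `?g x.2 =?= q ^ m * …`
    set f : ℕ → K := ((q ^ (m + 1)) ^ ·)
    set g : Set.powersetCard ℕ m → K := fun B => q ^ m * q ^ ∑ b ∈ (B : Finset ℕ), b
    have hf : Summable fun k => ‖f k‖ := summable_norm_geometric_of_norm_lt_one hqm
    have hg : Summable fun B => ‖g B‖ := by
      simpa only [g, norm_mul] using hnorm.mul_left ‖q ^ m‖
    have hweight : ∀ p, q ^ ∑ x ∈ (shiftInsertEquiv m p : Finset ℕ), x = f p.1 * g p.2 :=
      pow_sum_shiftInsertEquiv q m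
    rw [← (shiftInsertEquiv m).summable_iff, ← (shiftInsertEquiv m).hasSum_iff]
    simp only [Function.comp_def, hweight]
    refine ⟨hf.mul_norm hg, ?_⟩
    have hfsum : HasSum f (1 - q ^ (m + 1))⁻¹ := hasSum_geometric_of_norm_lt_one hqm
    have hgsum : HasSum g (q ^ m * (q ^ m.choose 2 / ∏ i ∈ range m, (1 - q ^ (i + 1)))) :=
      hsum.mul_left (q ^ m)
    have hval :
        (1 - q ^ (m + 1))⁻¹ * (q ^ m * (q ^ m.choose 2 / ∏ i ∈ range m, (1 - q ^ (i + 1))))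
          = q ^ (m + 1).choose 2 / ∏ i ∈ range (m + 1), (1 - q ^ (i + 1)) := by
      rw [Nat.choose_succ_succ', Nat.choose_one_right, prod_range_succ, pow_add,
        div_eq_mul_inv, div_eq_mul_inv, mul_inv]
      ring
    exact hval ▸ hfsum.mul hgsum (summable_mul_of_summable_norm hf hg)

def natSumFinEquivPNat (m : ℕ) : ℕ ⊕ Fin m ≃ ℕ+ :=
  (Equiv.sumComm ℕ (Fin m)).trans ((finSumNatEquiv m).trans Equiv.pnatEquivNat.symm)

@[simp] lemma coe_natSumFinEquivPNat_inl (m b : ℕ) :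
    (natSumFinEquivPNat m (.inl b) : ℕ) = m + b + 1 := rfl

@[simp] lemma coe_natSumFinEquivPNat_inr (m : ℕ) (i : Fin m) :
    (natSumFinEquivPNat m (.inr i) : ℕ) = i + 1 := rfl

section natSumFinEquivPNat

variable (m : ℕ) (B : Finset ℕ) (A : Finset (Fin m))

lemma card_filter_lt_map_disjSum :
    #(((B.disjSum A).map (natSumFinEquivPNat m).toEmbedding).filter (fun s : ℕ+ => m < (s : ℕ)))
      = #B := by
  rw [filter_map, card_map]
  convert card_map (s := B) (Function.Embedding.inl : ℕ ↪ ℕ ⊕ Fin m) using 2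
  ext (b | i) <;> simp

lemma card_map_disjSum : #((B.disjSum A).map (natSumFinEquivPNat m).toEmbedding) = #B + #A := by
  rw [card_map, card_disjSum]

lemma sum_coe_map_disjSum :
    ∑ s ∈ (B.disjSum A).map (natSumFinEquivPNat m).toEmbedding, (s : ℕ)
      = #B * (m + 1) + ∑ b ∈ B, b + ∑ i ∈ A, ((i : ℕ) + 1) := by
  rw [sum_map, sum_disjSum]
  simp only [Equiv.coe_toEmbedding, coe_natSumFinEquivPNat_inl, coe_natSumFinEquivPNat_inr,
    sum_add_distrib, sum_const, smul_eq_mul]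
  rw [sum_add_distrib, sum_const, smul_eq_mul]
  ring

end natSumFinEquivPNat

def rankSplitEquiv (m : ℕ) :
    Set.powersetCard ℕ m × Finset (Fin m) ≃
      {S : Finset ℕ+ // #(S.filter (fun s : ℕ+ => m < (s : ℕ))) = m} :=
  Equiv.prodSubtypeFstEquivSubtypeProd.symm.trans <|
    (Finset.sumEquiv.symm.toEquiv.trans (natSumFinEquivPNat m).finsetCongr).subtypeEquiv
      fun p => by
        rw [mem_iff]
        exact (card_filter_lt_map_disjSum m p.1 p.2).symm ▸ Iff.rfl

lemma coe_rankSplitEquiv (m : ℕ) (p : Set.powersetCard ℕ m × Finset (Fin m)) :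
    (rankSplitEquiv m p : Finset ℕ+)
      = ((p.1 : Finset ℕ).disjSum p.2).map (natSumFinEquivPNat m).toEmbedding :=
  rfl

lemma pow_card_mul_pow_sum_rankSplitEquiv {M : Type*} [CommMonoid M] (z q : M) (m : ℕ)
    (p : Set.powersetCard ℕ m × Finset (Fin m)) :
    z ^ #(rankSplitEquiv m p : Finset ℕ+)
        * q ^ ∑ s ∈ (rankSplitEquiv m p : Finset ℕ+), (s : ℕ)
      = (z ^ m * q ^ (m * (m + 1)) * q ^ ∑ b ∈ (p.1 : Finset ℕ), b)
        * ∏ i ∈ p.2, z * q ^ ((i : ℕ) + 1) := by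
  rw [coe_rankSplitEquiv, card_map_disjSum, sum_coe_map_disjSum, card_eq, prod_mul_distrib,
    prod_const, prod_pow_eq_pow_sum, pow_add z, pow_add q, pow_add q]
  ac_rfl

lemma mul_three_mul_add_one_div_two (m : ℕ) :
    m * (3 * m + 1) / 2 = m * (m + 1) + m.choose 2 := by
  rw [Nat.choose_two_right]
  have : m * (3 * m + 1) = m * (m - 1) + m * (m + 1) * 2 := by
    cases m with
    | zero => rfl
    | succ n => simp only [Nat.add_sub_cancel]; ring
  rw [this, Nat.add_mul_div_right _ _ two_pos, add_comm]

theorem rank_m_case_one_generating_function_general (m : ℕ)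
    (q z : ℂ) (hq : ‖q‖ < 1) :
    (∑' S : {S : Finset ℕ+ //
        (S.filter (fun s : ℕ+ => m < (s : ℕ))).card = m},
      z ^ (S : Finset ℕ+).card * q ^ (∑ s ∈ (S : Finset ℕ+), (s : ℕ))) =
    ((∏ i ∈ Finset.range m, (1 + z * q ^ (i + 1))) /
        (∏ i ∈ Finset.range m, (1 - q ^ (i + 1)))) *
      z ^ m * q ^ (m * (3 * m + 1) / 2) := by
  set f : Set.powersetCard ℕ m → ℂ :=
    fun B => z ^ m * q ^ (m * (m + 1)) * q ^ ∑ b ∈ (B : Finset ℕ), b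
  set g : Finset (Fin m) → ℂ := fun A => ∏ i ∈ A, z * q ^ ((i : ℕ) + 1)
  have hweight : ∀ p, z ^ #(rankSplitEquiv m p : Finset ℕ+)
      * q ^ ∑ s ∈ (rankSplitEquiv m p : Finset ℕ+), (s : ℕ) = f p.1 * g p.2 :=
    pow_card_mul_pow_sum_rankSplitEquiv z q m
  obtain ⟨hnorm, hsum⟩ := summable_norm_and_hasSum_pow_sum_powersetCard hq m
  have hf : Summable fun B => ‖f B‖ := by
    simpa only [f, norm_mul] using hnorm.mul_left ‖z ^ m * q ^ (m * (m + 1))‖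
  have hg : ∑ A, g A = ∏ i ∈ range m, (1 + z * q ^ (i + 1)) := by
    rw [← powerset_univ, ← prod_one_add,
      ← Fin.prod_univ_eq_prod_range (fun i => 1 + z * q ^ (i + 1))]
  rw [← (rankSplitEquiv m).tsum_eq, tsum_congr hweight,
    ← tsum_mul_tsum_of_summable_norm hf (.of_finite : Summable fun A => ‖g A‖), tsum_mul_left,
    hsum.tsum_eq, tsum_fintype, hg, mul_three_mul_add_one_div_two, pow_add]
  ring

/-- Generating function for rank-`m` tilings with `b(m) = m`:
the sum of `z^|S| q^(Σ_{s∈S} s)` over such finite subsets `S` of `ℤ_{>0}` is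
`((-zq;q)_m/(q;q)_m) z^m q^{m(3m+1)/2}`. -/
theorem rank_m_case_one_generating_function (m : ℕ) (hm : 0 < m)
    (q z : ℂ) (hq : ‖q‖ < 1) :
    (∑' S : {S : Finset ℕ+ //
        (S.filter (fun s : ℕ+ => m < (s : ℕ))).card = m},
      z ^ (S : Finset ℕ+).card * q ^ (∑ s ∈ (S : Finset ℕ+), (s : ℕ))) =
    ((∏ i ∈ Finset.range m, (1 + z * q ^ (i + 1))) /
        (∏ i ∈ Finset.range m, (1 - q ^ (i + 1)))) *
      z ^ m * q ^ (m * (3 * m + 1) / 2) :=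
  rank_m_case_one_generating_function_general m q z hq
end

section
/- Fix positive integers k and ℓ. For every nonempty finite subset S of the positive integers, there exists a unique positive integer m such that either (1) b_S(km) = ℓm − i for some integer i with 0 ≤ i ≤ ℓ−1, or (2) b_S(km − j) = ℓm − ℓ and b_S(km − j − 1) = ℓm − ℓ + 1 for some integer j with 0 ≤ j ≤ k−1; moreover conditions (1) and (2) cannot hold simultaneously for the same m. This m is the least positive integer with b_S(km) ≤ ℓm (the (k,ℓ)-rank of S). -/
/-!
The counting function `b` is antitone and drops by at most one at each step. Hence a
positive `m` satisfies (1) or (2) exactly when `ℓ(m-1) < b(k(m-1))` and `b(km) ≤ ℓm`: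
(1) is the case `b(km) > ℓ(m-1)`, and otherwise `b` must step down onto the level
`ℓ(m-1)` inside the block `(k(m-1), km]`, which is (2). By monotonicity these two
inequalities say precisely that `m` is the `(k,ℓ)`-rank.
-/

def tailCount (S : Finset ℕ+) (m : ℕ) : ℕ :=
  (S.filter fun s : ℕ+ => m < (s : ℕ)).card

theorem tailCount_antitone (S : Finset ℕ+) : Antitone (tailCount S) :=
  fun _ _ hmn => Finset.card_le_card fun s hs => by
    rw [Finset.mem_filter] at hs ⊢
    exact ⟨hs.1, hmn.trans_lt hs.2⟩

theorem tailCount_le_succ_add_one (S : Finset ℕ+) (m : ℕ) :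
    tailCount S m ≤ tailCount S (m + 1) + 1 := by
  have hsub : S.filter (fun s : ℕ+ => m < (s : ℕ)) ⊆
      insert m.succPNat (S.filter fun s : ℕ+ => m + 1 < (s : ℕ)) := by
    intro s hs
    rw [Finset.mem_filter] at hs
    rcases (Nat.succ_le_of_lt hs.2).eq_or_lt with heq | hlt
    · exact Finset.mem_insert.2 (Or.inl (PNat.eq heq.symm))
    · exact Finset.mem_insert_of_mem (Finset.mem_filter.2 ⟨hs.1, hlt⟩)
  exact (Finset.card_le_card hsub).trans (Finset.card_insert_le _ _)

theorem tailCount_zero_pos {S : Finset ℕ+} (hS : S.Nonempty) : 0 < tailCount S 0 := by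
  rw [tailCount, Finset.filter_true_of_mem fun s _ => s.pos]
  exact hS.card_pos

section

variable {b : ℕ → ℕ} {k l m : ℕ}

/-- Condition (1). -/
def LandsInWindow (b : ℕ → ℕ) (k l m : ℕ) : Prop :=
  ∃ i < l, b (k * m) = l * m - i

/-- Condition (2). -/
def CrossesInBlock (b : ℕ → ℕ) (k l m : ℕ) : Prop :=
  ∃ j < k, b (k * m - j) = l * m - l ∧ b (k * m - j - 1) = l * m - l + 1

theorem exists_step_onto_of_le_of_lt (hanti : Antitone b)
    (hstep : ∀ n, b n ≤ b (n + 1) + 1) {c s t : ℕ} (hbt : b t ≤ c) (hbs : c < b s) :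
    ∃ u, s ≤ u ∧ u < t ∧ b (u + 1) = c ∧ b u = c + 1 := by
  classical
  have hex : ∃ n, b n ≤ c := ⟨t, hbt⟩
  have hsv : s < Nat.find hex :=
    lt_of_not_ge fun hvs => (hanti hvs).not_gt (hbs.trans_le' (Nat.find_spec hex))
  obtain ⟨u, hu⟩ := Nat.exists_eq_add_one_of_ne_zero (n := Nat.find hex) (by omega)
  have hcu : c < b u := lt_of_not_ge (Nat.find_min hex (by omega))
  have hcu' : b (u + 1) ≤ c := hu ▸ Nat.find_spec hex
  have hvt : Nat.find hex ≤ t := Nat.find_min' hex hbt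
  have := hstep u
  exact ⟨u, by omega, by omega, by omega, by omega⟩

theorem landsInWindow_or_crossesInBlock_succ_iff (hanti : Antitone b)
    (hstep : ∀ n, b n ≤ b (n + 1) + 1) :
    LandsInWindow b k l (m + 1) ∨ CrossesInBlock b k l (m + 1) ↔
      l * m < b (k * m) ∧ b (k * (m + 1)) ≤ l * (m + 1) := by
  have hkm : k * (m + 1) = k * m + k := by ring
  have hlm : l * (m + 1) = l * m + l := by ring
  constructor
  · rintro (⟨i, hi, hbi⟩ | ⟨j, hj, hbj, hbj'⟩)
    · have := hanti (show k * m ≤ k * (m + 1) by omega)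
      omega
    · have := hanti (show k * m ≤ k * (m + 1) - j - 1 by omega)
      have := hanti (show k * (m + 1) - j ≤ k * (m + 1) by omega)
      omega
  · rintro ⟨hprev, hle⟩
    by_cases hwin : l * m < b (k * (m + 1))
    · exact Or.inl ⟨l * (m + 1) - b (k * (m + 1)), by omega, by omega⟩
    · obtain ⟨u, hsu, hut, hu1, hu⟩ :=
        exists_step_onto_of_le_of_lt hanti hstep (not_lt.1 hwin) hprev
      refine Or.inr ⟨k * (m + 1) - (u + 1), by omega, ?_, ?_⟩
      · rw [show k * (m + 1) - (k * (m + 1) - (u + 1)) = u + 1 by omega]; omega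
      · rw [show k * (m + 1) - (k * (m + 1) - (u + 1)) - 1 = u by omega]; omega

theorem not_landsInWindow_and_crossesInBlock (hanti : Antitone b) (hm : 0 < m) :
    ¬(LandsInWindow b k l m ∧ CrossesInBlock b k l m) := by
  rintro ⟨⟨i, hi, hbi⟩, ⟨j, -, hbj, -⟩⟩
  have := hanti (Nat.sub_le (k * m) j)
  have := Nat.le_mul_of_pos_right l hm
  omega

theorem isLeast_of_lt_of_le (hanti : Antitone b) (hprev : l * m < b (k * m))
    (hle : b (k * (m + 1)) ≤ l * (m + 1)) :
    IsLeast {n | 0 < n ∧ b (k * n) ≤ l * n} (m + 1) := by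
  refine ⟨⟨m.succ_pos, hle⟩, fun n ⟨_, hn⟩ => ?_⟩
  by_contra! hnm
  have := hanti (Nat.mul_le_mul_left k (Nat.le_of_lt_succ hnm))
  have := Nat.mul_le_mul_left l (Nat.le_of_lt_succ hnm)
  omega

theorem isLeast_of_landsInWindow_or_crossesInBlock (hanti : Antitone b)
    (hstep : ∀ n, b n ≤ b (n + 1) + 1) (hm : 0 < m)
    (h : LandsInWindow b k l m ∨ CrossesInBlock b k l m) :
    IsLeast {n | 0 < n ∧ b (k * n) ≤ l * n} m := by
  obtain ⟨m, rfl⟩ := Nat.exists_eq_add_one_of_ne_zero hm.ne'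
  obtain ⟨hprev, hle⟩ := (landsInWindow_or_crossesInBlock_succ_iff hanti hstep).1 h
  exact isLeast_of_lt_of_le hanti hprev hle

theorem landsInWindow_or_crossesInBlock_of_isLeast (hanti : Antitone b)
    (hstep : ∀ n, b n ≤ b (n + 1) + 1) (hb0 : 0 < b 0)
    (hr : IsLeast {n | 0 < n ∧ b (k * n) ≤ l * n} m) :
    LandsInWindow b k l m ∨ CrossesInBlock b k l m := by
  obtain ⟨⟨hm, hle⟩, hmin⟩ := hr
  obtain ⟨m, rfl⟩ := Nat.exists_eq_add_one_of_ne_zero hm.ne'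
  refine (landsInWindow_or_crossesInBlock_succ_iff hanti hstep).2 ⟨?_, hle⟩
  rcases Nat.eq_zero_or_pos m with rfl | hpos
  · simpa using hb0
  · exact lt_of_not_ge fun h => (Nat.lt_succ_self m).not_ge (hmin ⟨hpos, h⟩)

theorem exists_isLeast_rank (hanti : Antitone b) (hl : 0 < l) :
    ∃ r, IsLeast {n | 0 < n ∧ b (k * n) ≤ l * n} r := by
  classical
  have hex : ∃ n, 0 < n ∧ b (k * n) ≤ l * n :=
    ⟨b 0 + 1, Nat.succ_pos _, (hanti (Nat.zero_le _)).trans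
      ((Nat.le_succ _).trans (Nat.le_mul_of_pos_left _ hl))⟩
  exact ⟨_, Nat.isLeast_find hex⟩

end

theorem kl_rank_dichotomy_general (k l : ℕ) (hl : 0 < l)
    (S : Finset ℕ+) (hS : S.Nonempty)
    (b : ℕ → ℕ) (hb : ∀ m : ℕ, b m = (S.filter (fun s : ℕ+ => m < (s : ℕ))).card) :
    (∃! m : ℕ, 0 < m ∧
        ((∃ i : ℕ, i < l ∧ b (k * m) = l * m - i) ∨
          (∃ j : ℕ, j < k ∧ b (k * m - j) = l * m - l ∧
            b (k * m - j - 1) = l * m - l + 1))) ∧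
    (∀ m : ℕ, 0 < m →
        ¬((∃ i : ℕ, i < l ∧ b (k * m) = l * m - i) ∧
          (∃ j : ℕ, j < k ∧ b (k * m - j) = l * m - l ∧
            b (k * m - j - 1) = l * m - l + 1))) ∧
    (∀ m : ℕ, (0 < m ∧
        ((∃ i : ℕ, i < l ∧ b (k * m) = l * m - i) ∨
          (∃ j : ℕ, j < k ∧ b (k * m - j) = l * m - l ∧
            b (k * m - j - 1) = l * m - l + 1))) →
        IsLeast {n : ℕ | 0 < n ∧ b (k * n) ≤ l * n} m) := by
  obtain rfl : b = tailCount S := funext hb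
  have hanti := tailCount_antitone S
  have hstep := tailCount_le_succ_add_one S
  have hleast : ∀ m, 0 < m ∧ (LandsInWindow (tailCount S) k l m ∨
      CrossesInBlock (tailCount S) k l m) →
      IsLeast {n | 0 < n ∧ tailCount S (k * n) ≤ l * n} m :=
    fun m h => isLeast_of_landsInWindow_or_crossesInBlock hanti hstep h.1 h.2
  obtain ⟨r, hr⟩ := exists_isLeast_rank (k := k) hanti hl
  refine ⟨⟨r, ⟨hr.1.1, ?_⟩, fun m hm => (hleast m hm).unique hr⟩,
    fun m hm => not_landsInWindow_and_crossesInBlock hanti hm, hleast⟩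
  exact landsInWindow_or_crossesInBlock_of_isLeast hanti hstep (tailCount_zero_pos hS) hr

/-- `(k,ℓ)`-rank dichotomy: for every nonempty finite set `S` of positive
integers, with `b m = |{s ∈ S : s > m}|`, there is a unique positive integer
`m` such that (1) `b (km) = ℓm - i` for some `0 ≤ i ≤ ℓ-1`, or
(2) `b (km - j) = ℓm - ℓ` and `b (km - j - 1) = ℓm - ℓ + 1` for some
`0 ≤ j ≤ k-1`; the two cases are mutually exclusive, and this `m` is the
least positive integer with `b (km) ≤ ℓm` (the `(k,ℓ)`-rank of `S`). -/
theorem kl_rank_dichotomy (k l : ℕ) (hk : 0 < k) (hl : 0 < l)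
    (S : Finset ℕ+) (hS : S.Nonempty)
    (b : ℕ → ℕ) (hb : ∀ m : ℕ, b m = (S.filter (fun s : ℕ+ => m < (s : ℕ))).card) :
    (∃! m : ℕ, 0 < m ∧
        ((∃ i : ℕ, i < l ∧ b (k * m) = l * m - i) ∨
          (∃ j : ℕ, j < k ∧ b (k * m - j) = l * m - l ∧
            b (k * m - j - 1) = l * m - l + 1))) ∧
    (∀ m : ℕ, 0 < m →
        ¬((∃ i : ℕ, i < l ∧ b (k * m) = l * m - i) ∧
          (∃ j : ℕ, j < k ∧ b (k * m - j) = l * m - l ∧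
            b (k * m - j - 1) = l * m - l + 1))) ∧
    (∀ m : ℕ, (0 < m ∧
        ((∃ i : ℕ, i < l ∧ b (k * m) = l * m - i) ∨
          (∃ j : ℕ, j < k ∧ b (k * m - j) = l * m - l ∧
            b (k * m - j - 1) = l * m - l + 1))) →
        IsLeast {n : ℕ | 0 < n ∧ b (k * n) ≤ l * n} m) :=
  kl_rank_dichotomy_general k l hl S hS b hb
end

section
/- Fix positive integers k and ℓ. For all complex numbers q and z with |q| < 1, (-zq;q)_∞ = 1 + ∑_{m=1}^{∞} ∑_{i=0}^{ℓ-1} ((-zq;q)_{km}/(q;q)_{ℓm-i}) z^{ℓm-i} q^{(ℓm-i)((2k+ℓ)m-i+1)/2} + ∑_{m=1}^{∞} ∑_{j=0}^{k-1} ((-zq;q)_{km-j-1}/(q;q)_{ℓm-ℓ}) z^{ℓm-ℓ+1} q^{(ℓm-ℓ+1)((2k+ℓ)m-2j-ℓ)/2}. -/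
/-!
With `t_c(n) = zⁿ q^{n(2c+n+1)/2} / (q;q)ₙ` and `u_c(n) = (1 - qⁿ) t_c(n)` one has
`t_c(n) - (1 + zq^{c+1}) t_{c+1}(n) = u_c(n) - u_c(n+1)`. Summing over `n ≥ N`, the quantity
`V(c, N) = (-zq;q)_c ∑_{n ≥ N} t_c(n)` drops by `(-zq;q)_c u_c(N)` when `c` grows by one.
Since `u_c(0) = 0`, `V(c, 0)` does not depend on `c`, and `c → ∞` gives Euler's identity
`∑ₙ t_0(n) = (-zq;q)_∞`. The rank identity telescopes `T(m) = V(km, lm + 1)`: raising `c` from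
`km` to `k(m+1)` produces the `k` terms of the second sum, raising `N` from `lm + 1` to
`l(m+1) + 1` the `l` terms of the first, and `T(m) → 0`.
-/

open Finset Filter Topology

namespace RankIdentity

lemma tsum_sub_succ_of_tendsto_zero {G : Type*} [AddCommGroup G] [TopologicalSpace G]
    [IsTopologicalAddGroup G] [T2Space G] {f : ℕ → G}
    (hs : Summable fun n => f n - f (n + 1)) (hf : Tendsto f atTop (𝓝 0)) :
    ∑' n, (f n - f (n + 1)) = f 0 := by
  refine tendsto_nhds_unique hs.tendsto_sum_tsum_nat ?_
  simp_rw [sum_range_sub']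
  simpa using tendsto_const_nhds.sub hf

noncomputable def qPochhammer (a q : ℂ) (n : ℕ) : ℂ := ∏ i ∈ range n, (1 - a * q ^ i)

variable {a q z : ℂ}

@[simp]
lemma qPochhammer_zero : qPochhammer a q 0 = 1 := prod_range_zero _

lemma qPochhammer_succ (n : ℕ) : qPochhammer a q (n + 1) = qPochhammer a q n * (1 - a * q ^ n) :=
  prod_range_succ _ _

lemma qPochhammer_self_eq (n : ℕ) : qPochhammer q q n = ∏ i ∈ range n, (1 - q ^ (i + 1)) :=
  prod_congr rfl fun i _ => by ring

lemma qPochhammer_neg_mul_eq (n : ℕ) :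
    qPochhammer (-(z * q)) q n = ∏ i ∈ range n, (1 + z * q ^ (i + 1)) :=
  prod_congr rfl fun i _ => by ring

lemma qPochhammer_self_succ (n : ℕ) :
    qPochhammer q q (n + 1) = qPochhammer q q n * (1 - q ^ (n + 1)) := by
  rw [qPochhammer_succ, pow_succ']

lemma qPochhammer_neg_mul_succ (n : ℕ) :
    qPochhammer (-(z * q)) q (n + 1) = qPochhammer (-(z * q)) q n * (1 + z * q ^ (n + 1)) := by
  rw [qPochhammer_succ]; ring

lemma one_sub_pow_succ_ne_zero (hq : ‖q‖ < 1) (n : ℕ) : 1 - q ^ (n + 1) ≠ 0 := by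
  rw [sub_ne_zero]
  intro h
  have : ‖q ^ (n + 1)‖ < 1 := by
    rw [norm_pow]; exact pow_lt_one₀ (norm_nonneg q) hq (Nat.succ_ne_zero n)
  simp [← h] at this

lemma tendsto_qPochhammer (hq : ‖q‖ < 1) (a : ℂ) :
    Tendsto (qPochhammer a q) atTop (𝓝 (∏' i, (1 - a * q ^ i))) := by
  have hsum : Summable fun i => -(a * q ^ i) :=
    ((summable_geometric_of_norm_lt_one hq).mul_left a).neg
  have h := (Complex.multipliable_one_add_of_summable hsum).hasProd.tendsto_prod_nat
  simp only [← sub_eq_add_neg] at h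
  exact h

lemma exists_norm_qPochhammer_le (hq : ‖q‖ < 1) (a : ℂ) :
    ∃ C, ∀ n, ‖qPochhammer a q n‖ ≤ C := by
  obtain ⟨C, hC⟩ := isBounded_iff_forall_norm_le.1
    (Metric.isBounded_range_of_tendsto _ (tendsto_qPochhammer hq a))
  exact ⟨C, fun n => hC _ ⟨n, rfl⟩⟩

noncomputable def eulerTerm (q z : ℂ) (c n : ℕ) : ℂ :=
  z ^ n * q ^ (n * (2 * c + n + 1) / 2) / qPochhammer q q n

@[simp]
lemma eulerTerm_zero_right (c : ℕ) : eulerTerm q z c 0 = 1 := by simp [eulerTerm]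

lemma eulerTerm_succ_left (c n : ℕ) : eulerTerm q z (c + 1) n = q ^ n * eulerTerm q z c n := by
  have h : n * (2 * (c + 1) + n + 1) / 2 = n * (2 * c + n + 1) / 2 + n := by
    rw [show n * (2 * (c + 1) + n + 1) = n * (2 * c + n + 1) + 2 * n by ring,
      Nat.add_mul_div_left _ _ two_pos]
  rw [eulerTerm, eulerTerm, h, pow_add]
  ring

lemma eulerTerm_eq_pow_mul (c n : ℕ) : eulerTerm q z c n = (q ^ n) ^ c * eulerTerm q z 0 n := by
  induction c with
  | zero => simp
  | succ c ih => rw [eulerTerm_succ_left, ih, pow_succ]; ring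

lemma norm_eulerTerm_le (hq : ‖q‖ < 1) (c n : ℕ) :
    ‖eulerTerm q z c n‖ ≤ ‖eulerTerm q z 0 n‖ := by
  rw [eulerTerm_eq_pow_mul, norm_mul]
  refine mul_le_of_le_one_left (norm_nonneg _) ?_
  rw [norm_pow, norm_pow]
  exact pow_le_one₀ (by positivity) (pow_le_one₀ (norm_nonneg q) hq.le)

lemma eulerTerm_succ_mul_one_sub (hq : ‖q‖ < 1) (c n : ℕ) :
    eulerTerm q z c (n + 1) * (1 - q ^ (n + 1)) = z * q ^ (c + n + 1) * eulerTerm q z c n := by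
  have h : (n + 1) * (2 * c + (n + 1) + 1) / 2 = n * (2 * c + n + 1) / 2 + (c + n + 1) := by
    rw [show (n + 1) * (2 * c + (n + 1) + 1) = n * (2 * c + n + 1) + 2 * (c + n + 1) by ring,
      Nat.add_mul_div_left _ _ two_pos]
  rw [eulerTerm, eulerTerm, h, qPochhammer_self_succ, ← div_div,
    div_mul_cancel₀ _ (one_sub_pow_succ_ne_zero hq n), pow_add, pow_succ]
  ring

lemma eulerTerm_sub_succ_left (hq : ‖q‖ < 1) (c n : ℕ) :
    eulerTerm q z c n - (1 + z * q ^ (c + 1)) * eulerTerm q z (c + 1) n =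
      eulerTerm q z c n * (1 - q ^ n) - eulerTerm q z c (n + 1) * (1 - q ^ (n + 1)) := by
  rw [eulerTerm_succ_left, eulerTerm_succ_mul_one_sub hq]
  ring

lemma summable_norm_eulerTerm (hq : ‖q‖ < 1) : Summable fun n => ‖eulerTerm q z 0 n‖ := by
  refine summable_of_ratio_norm_eventually_le (r := 1 / 2) (by norm_num) ?_
  have hpow : Tendsto (fun n : ℕ => ‖q‖ ^ (n + 1)) atTop (𝓝 0) :=
    (tendsto_pow_atTop_nhds_zero_of_lt_one (norm_nonneg q) hq).comp (tendsto_add_atTop_nat 1)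
  have hzpow : Tendsto (fun n : ℕ => ‖z‖ * ‖q‖ ^ (n + 1)) atTop (𝓝 0) := by
    simpa using hpow.const_mul ‖z‖
  filter_upwards [hpow.eventually_le_const (by norm_num : (0 : ℝ) < 1 / 2),
    hzpow.eventually_le_const (by norm_num : (0 : ℝ) < 1 / 4)] with n hq2 hzq4
  have hrec := congrArg norm (eulerTerm_succ_mul_one_sub (z := z) hq 0 n)
  rw [norm_mul, norm_mul, norm_mul, norm_pow, zero_add] at hrec
  have hfactor : 1 / 2 ≤ ‖1 - q ^ (n + 1)‖ := by
    have := norm_sub_norm_le (1 : ℂ) (q ^ (n + 1))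
    rw [norm_one, norm_pow] at this
    linarith
  simp only [Real.norm_eq_abs, abs_norm]
  nlinarith [norm_nonneg (eulerTerm q z 0 (n + 1)), norm_nonneg (eulerTerm q z 0 n)]

lemma summable_eulerTerm (hq : ‖q‖ < 1) (c : ℕ) : Summable (eulerTerm q z c) :=
  .of_norm_bounded (summable_norm_eulerTerm hq) (norm_eulerTerm_le hq c)

lemma tendsto_tsum_eulerTerm (hq : ‖q‖ < 1) :
    Tendsto (fun c => ∑' n, eulerTerm q z c n) atTop (𝓝 1) := by
  have hlim : ∀ n, Tendsto (fun c => eulerTerm q z c n) atTop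
      (𝓝 (if n = 0 then 1 else 0)) := by
    rintro (_ | n)
    · simp
    · have hqn : ‖q ^ (n + 1)‖ < 1 := by
        rw [norm_pow]; exact pow_lt_one₀ (norm_nonneg q) hq (Nat.succ_ne_zero n)
      simpa [← eulerTerm_eq_pow_mul] using
        (tendsto_pow_atTop_nhds_zero_of_norm_lt_one hqn).mul_const (eulerTerm q z 0 (n + 1))
  simpa using tendsto_tsum_of_dominated_convergence (summable_norm_eulerTerm hq) hlim
    (.of_forall fun c n => norm_eulerTerm_le hq c n)

lemma norm_one_sub_pow_le_two (hq : ‖q‖ < 1) (n : ℕ) : ‖1 - q ^ n‖ ≤ 2 := by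
  refine (norm_sub_le _ _).trans ?_
  rw [norm_one, norm_pow]
  linarith [pow_le_one₀ (norm_nonneg q) hq.le (n := n)]

noncomputable def eulerTail (q z : ℂ) (c N : ℕ) : ℂ :=
  qPochhammer (-(z * q)) q c * ∑' n, eulerTerm q z c (n + N)

lemma eulerTail_sub_succ_left (hq : ‖q‖ < 1) (c N : ℕ) :
    eulerTail q z c N - eulerTail q z (c + 1) N =
      qPochhammer (-(z * q)) q c * (eulerTerm q z c N * (1 - q ^ N)) := by
  have hshift (c : ℕ) : Summable fun n => eulerTerm q z c (n + N) :=
    (summable_nat_add_iff N).2 (summable_eulerTerm hq c)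
  set u : ℕ → ℂ := fun n => eulerTerm q z c (n + N) * (1 - q ^ (n + N)) with hu_def
  have hu : Summable u := by
    refine .of_norm_bounded
      (((summable_nat_add_iff N).2 (summable_norm_eulerTerm (z := z) hq)).mul_right 2) fun n => ?_
    rw [hu_def, norm_mul]
    exact mul_le_mul (norm_eulerTerm_le hq _ _) (norm_one_sub_pow_le_two hq _)
      (norm_nonneg _) (norm_nonneg _)
  have htel : ∑' n, (u n - u (n + 1)) = u 0 :=
    tsum_sub_succ_of_tendsto_zero (hu.sub ((summable_nat_add_iff 1).2 hu)) hu.tendsto_atTop_zero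
  calc eulerTail q z c N - eulerTail q z (c + 1) N
      = qPochhammer (-(z * q)) q c * ∑' n, (eulerTerm q z c (n + N) -
          (1 + z * q ^ (c + 1)) * eulerTerm q z (c + 1) (n + N)) := by
        rw [eulerTail, eulerTail, qPochhammer_neg_mul_succ,
          (hshift c).tsum_sub ((hshift (c + 1)).mul_left _), tsum_mul_left]
        ring
    _ = qPochhammer (-(z * q)) q c * ∑' n, (u n - u (n + 1)) := by
        simp_rw [eulerTerm_sub_succ_left hq, hu_def, add_right_comm _ 1 N]
    _ = qPochhammer (-(z * q)) q c * (eulerTerm q z c N * (1 - q ^ N)) := by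
        rw [htel]
        simp only [hu_def, zero_add]

lemma eulerTail_sub_add_left (hq : ‖q‖ < 1) (c j N : ℕ) :
    eulerTail q z c N - eulerTail q z (c + j) N =
      ∑ i ∈ range j,
        qPochhammer (-(z * q)) q (c + i) * (eulerTerm q z (c + i) N * (1 - q ^ N)) := by
  have h := sum_range_sub' (fun i => eulerTail q z (c + i) N) j
  rw [add_zero] at h
  rw [← h]
  exact sum_congr rfl fun i _ => eulerTail_sub_succ_left hq (c + i) N

lemma eulerTail_eq_sum_add (hq : ‖q‖ < 1) (c N L : ℕ) :
    eulerTail q z c N =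
      qPochhammer (-(z * q)) q c * ∑ i ∈ range L, eulerTerm q z c (i + N) +
        eulerTail q z c (N + L) := by
  rw [eulerTail, eulerTail, ← mul_add,
    ← ((summable_nat_add_iff N).2 (summable_eulerTerm hq c)).sum_add_tsum_nat_add L]
  congr 2
  exact tsum_congr fun i => by rw [add_assoc, add_comm L]

lemma eulerTail_zero_right (hq : ‖q‖ < 1) (c : ℕ) :
    eulerTail q z c 0 = ∑' n, eulerTerm q z 0 n := by
  induction c with
  | zero => simp [eulerTail]
  | succ c ih =>
    have h := eulerTail_sub_succ_left (z := z) hq c 0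
    rw [pow_zero, sub_self, mul_zero, mul_zero, sub_eq_zero] at h
    rw [← h, ih]

theorem tsum_eulerTerm_zero (hq : ‖q‖ < 1) :
    ∑' n, eulerTerm q z 0 n = ∏' i, (1 + z * q ^ (i + 1)) := by
  have hconst (c : ℕ) :
      qPochhammer (-(z * q)) q c * ∑' n, eulerTerm q z c n = ∑' n, eulerTerm q z 0 n := by
    simpa [eulerTail] using eulerTail_zero_right (z := z) hq c
  have hlim := ((tendsto_qPochhammer hq (-(z * q))).mul (tendsto_tsum_eulerTerm hq)).congr hconst
  rw [tendsto_const_nhds_iff.1 hlim, mul_one]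
  exact tprod_congr fun i => by ring

lemma tendsto_eulerTail (hq : ‖q‖ < 1) (c : ℕ → ℕ) {N : ℕ → ℕ}
    (hN : Tendsto N atTop atTop) :
    Tendsto (fun m => eulerTail q z (c m) (N m)) atTop (𝓝 0) := by
  obtain ⟨C, hC⟩ := exists_norm_qPochhammer_le hq (-(z * q))
  have htail : Tendsto (fun m => ∑' n, ‖eulerTerm q z 0 (n + N m)‖) atTop (𝓝 0) :=
    (tendsto_sum_nat_add fun n => ‖eulerTerm q z 0 n‖).comp hN
  refine squeeze_zero_norm (fun m => ?_) (by simpa using htail.const_mul C)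
  rw [eulerTail, norm_mul]
  exact mul_le_mul (hC _)
    (tsum_of_norm_bounded ((summable_nat_add_iff _).2 (summable_norm_eulerTerm hq)).hasSum
      fun n => norm_eulerTerm_le hq _ _)
    (norm_nonneg _) ((norm_nonneg _).trans (hC 0))

lemma summable_norm_qPochhammer_mul_eulerTerm (hq : ‖q‖ < 1) (c : ℕ → ℕ) {e : ℕ → ℕ}
    (he : Function.Injective e) :
    Summable fun m => ‖qPochhammer (-(z * q)) q (c m) * eulerTerm q z (c m) (e m)‖ := by
  obtain ⟨C, hC⟩ := exists_norm_qPochhammer_le hq (-(z * q))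
  refine .of_nonneg_of_le (fun _ => norm_nonneg _) (fun m => ?_)
    (((summable_norm_eulerTerm (z := z) hq).comp_injective he).mul_left C)
  rw [norm_mul]
  exact mul_le_mul (hC _) (norm_eulerTerm_le hq _ _) (norm_nonneg _) ((norm_nonneg _).trans (hC 0))

lemma summable_qPochhammer_mul_eulerTerm_mul_one_sub (hq : ‖q‖ < 1) (c : ℕ → ℕ)
    {e : ℕ → ℕ} (he : Function.Injective e) :
    Summable fun m =>
      qPochhammer (-(z * q)) q (c m) * (eulerTerm q z (c m) (e m) * (1 - q ^ e m)) := by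
  refine .of_norm_bounded ((summable_norm_qPochhammer_mul_eulerTerm (z := z) hq c he).mul_right 2)
    fun m => ?_
  rw [← mul_assoc, norm_mul]
  exact mul_le_mul_of_nonneg_left (norm_one_sub_pow_le_two hq _) (norm_nonneg _)

lemma eulerTerm_eq_of_add_eq {c n e : ℕ} (h : 2 * c + n + 1 = e) :
    eulerTerm q z c n = z ^ n * q ^ (n * e / 2) / qPochhammer q q n := by
  rw [eulerTerm, h]

lemma eulerTerm_succ_mul_one_sub_eq_of_add_eq (hq : ‖q‖ < 1) {c n e : ℕ}
    (h : 2 * c + n + 2 = e) :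
    eulerTerm q z c (n + 1) * (1 - q ^ (n + 1)) =
      z ^ (n + 1) * q ^ ((n + 1) * e / 2) / qPochhammer q q n := by
  rw [eulerTerm, qPochhammer_self_succ, ← div_div,
    div_mul_cancel₀ _ (one_sub_pow_succ_ne_zero hq n), ← h]
  rfl

-- The inner sums of the identity, with the order of summation reversed.
noncomputable def firstInnerSum (q z : ℂ) (k l m : ℕ) : ℂ :=
  ∑ i ∈ range l,
    qPochhammer (-(z * q)) q (k * (m + 1)) * eulerTerm q z (k * (m + 1)) (i + (l * m + 1))

noncomputable def secondInnerSum (q z : ℂ) (k l m : ℕ) : ℂ :=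
  ∑ j ∈ range k, qPochhammer (-(z * q)) q (k * m + j) *
    (eulerTerm q z (k * m + j) (l * m + 1) * (1 - q ^ (l * m + 1)))

lemma sum_eq_firstInnerSum (k l m : ℕ) :
    ∑ i ∈ range l,
        ((∏ a ∈ range (k * (m + 1)), (1 + z * q ^ (a + 1))) /
            (∏ a ∈ range (l * (m + 1) - i), (1 - q ^ (a + 1)))) *
          z ^ (l * (m + 1) - i) *
          q ^ ((l * (m + 1) - i) * ((2 * k + l) * (m + 1) - i + 1) / 2) =
      firstInnerSum q z k l m := by
  rw [firstInnerSum, ← sum_range_reflect]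
  refine sum_congr rfl fun i hi => ?_
  have hil := mem_range.1 hi
  have hl : l * (m + 1) = l * m + l := by ring
  have hkl : (2 * k + l) * (m + 1) = 2 * (k * (m + 1)) + l * (m + 1) := by ring
  rw [show l * (m + 1) - (l - 1 - i) = i + (l * m + 1) by omega,
    eulerTerm_eq_of_add_eq (e := (2 * k + l) * (m + 1) - (l - 1 - i) + 1) (by omega),
    qPochhammer_neg_mul_eq, qPochhammer_self_eq]
  ring

lemma sum_eq_secondInnerSum (hq : ‖q‖ < 1) (k l m : ℕ) :
    ∑ j ∈ range k,
        ((∏ a ∈ range (k * (m + 1) - j - 1), (1 + z * q ^ (a + 1))) /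
            (∏ a ∈ range (l * (m + 1) - l), (1 - q ^ (a + 1)))) *
          z ^ (l * (m + 1) - l + 1) *
          q ^ ((l * (m + 1) - l + 1) * ((2 * k + l) * (m + 1) - 2 * j - l) / 2) =
      secondInnerSum q z k l m := by
  rw [secondInnerSum, ← sum_range_reflect]
  refine sum_congr rfl fun j hj => ?_
  have hjk := mem_range.1 hj
  have hk : k * (m + 1) = k * m + k := by ring
  have hl : l * (m + 1) = l * m + l := by ring
  have hkl : (2 * k + l) * (m + 1) = 2 * (k * (m + 1)) + l * (m + 1) := by ring
  rw [show k * (m + 1) - (k - 1 - j) - 1 = k * m + j by omega,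
    show l * (m + 1) - l = l * m by omega,
    eulerTerm_succ_mul_one_sub_eq_of_add_eq hq
      (e := (2 * k + l) * (m + 1) - 2 * (k - 1 - j) - l) (by omega),
    qPochhammer_neg_mul_eq, qPochhammer_self_eq]
  ring

lemma eulerTail_sub_eulerTail_succ (hq : ‖q‖ < 1) (k l m : ℕ) :
    eulerTail q z (k * m) (l * m + 1) - eulerTail q z (k * (m + 1)) (l * (m + 1) + 1) =
      firstInnerSum q z k l m + secondInnerSum q z k l m := by
  have hc := eulerTail_sub_add_left (z := z) hq (k * m) k (l * m + 1)
  have hN := eulerTail_eq_sum_add (z := z) hq (k * (m + 1)) (l * m + 1) l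
  rw [← mul_add_one k m] at hc
  rw [show l * m + 1 + l = l * (m + 1) + 1 by ring, mul_sum] at hN
  rw [firstInnerSum, secondInnerSum]
  linear_combination hc + hN

lemma injective_add_mul_add_one {l : ℕ} (hl : 0 < l) (i : ℕ) :
    Function.Injective fun m => i + (l * m + 1) := fun m m' h => by
  simpa [hl.ne'] using h

lemma summable_firstInnerSum (hq : ‖q‖ < 1) (k : ℕ) {l : ℕ} (hl : 0 < l) :
    Summable (firstInnerSum q z k l) :=
  summable_sum fun i _ => (summable_norm_qPochhammer_mul_eulerTerm hq (fun m => k * (m + 1))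
    (injective_add_mul_add_one hl i)).of_norm

lemma summable_secondInnerSum (hq : ‖q‖ < 1) (k : ℕ) {l : ℕ} (hl : 0 < l) :
    Summable (secondInnerSum q z k l) :=
  summable_sum fun j _ => summable_qPochhammer_mul_eulerTerm_mul_one_sub hq (fun m => k * m + j)
    (by simpa using injective_add_mul_add_one hl 0)

lemma eulerTail_zero_one (hq : ‖q‖ < 1) :
    eulerTail q z 0 1 = (∏' i : ℕ, (1 + z * q ^ (i + 1))) - 1 := by
  rw [← tsum_eulerTerm_zero hq, (summable_eulerTerm hq 0).tsum_eq_zero_add, eulerTail,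
    qPochhammer_zero, one_mul, eulerTerm_zero_right, add_sub_cancel_left]

end RankIdentity

open RankIdentity

theorem kl_rank_identity_general (k l : ℕ) (hl : 0 < l)
    (q z : ℂ) (hq : ‖q‖ < 1) :
    (∏' i : ℕ, (1 + z * q ^ (i + 1))) =
      1 +
      (∑' m : ℕ, ∑ i ∈ Finset.range l,
        ((∏ a ∈ Finset.range (k * (m + 1)), (1 + z * q ^ (a + 1))) /
            (∏ a ∈ Finset.range (l * (m + 1) - i), (1 - q ^ (a + 1)))) *
          z ^ (l * (m + 1) - i) *
          q ^ ((l * (m + 1) - i) * ((2 * k + l) * (m + 1) - i + 1) / 2)) +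
      (∑' m : ℕ, ∑ j ∈ Finset.range k,
        ((∏ a ∈ Finset.range (k * (m + 1) - j - 1), (1 + z * q ^ (a + 1))) /
            (∏ a ∈ Finset.range (l * (m + 1) - l), (1 - q ^ (a + 1)))) *
          z ^ (l * (m + 1) - l + 1) *
          q ^ ((l * (m + 1) - l + 1) * ((2 * k + l) * (m + 1) - 2 * j - l) / 2)) := by
  set T : ℕ → ℂ := fun m => eulerTail q z (k * m) (l * m + 1)
  have hstep (m : ℕ) : T m - T (m + 1) = firstInnerSum q z k l m + secondInnerSum q z k l m :=
    eulerTail_sub_eulerTail_succ hq k l m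
  have hfirst := summable_firstInnerSum (z := z) hq k hl
  have hsecond := summable_secondInnerSum (z := z) hq k hl
  have hT : Tendsto T atTop (𝓝 0) := tendsto_eulerTail hq _ <|
    tendsto_atTop_mono (fun m => (Nat.le_mul_of_pos_left m hl).trans (Nat.le_succ _)) tendsto_id
  have hT0 : T 0 = (∏' i : ℕ, (1 + z * q ^ (i + 1))) - 1 := by
    simpa [T] using eulerTail_zero_one (z := z) hq
  rw [tsum_congr (sum_eq_firstInnerSum k l), tsum_congr (sum_eq_secondInnerSum hq k l), add_assoc,
    ← hfirst.tsum_add hsecond, ← tsum_congr hstep,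
    tsum_sub_succ_of_tendsto_zero ((hfirst.add hsecond).congr fun m => (hstep m).symm) hT, hT0]
  ring

/-- The `(k,ℓ)`-rank identity (Theorem 3.6): for `|q| < 1`,
`(-zq;q)_∞ = 1
  + ∑_{m=1}^∞ ∑_{i=0}^{ℓ-1} ((-zq;q)_{km}/(q;q)_{ℓm-i}) z^{ℓm-i} q^{(ℓm-i)((2k+ℓ)m-i+1)/2}
  + ∑_{m=1}^∞ ∑_{j=0}^{k-1} ((-zq;q)_{km-j-1}/(q;q)_{ℓm-ℓ}) z^{ℓm-ℓ+1} q^{(ℓm-ℓ+1)((2k+ℓ)m-2j-ℓ)/2}`.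
(The outer series index is shifted: `m + 1` plays the role of `m ≥ 1`.) -/
theorem kl_rank_identity (k l : ℕ) (hk : 0 < k) (hl : 0 < l)
    (q z : ℂ) (hq : ‖q‖ < 1) :
    (∏' i : ℕ, (1 + z * q ^ (i + 1))) =
      1 +
      (∑' m : ℕ, ∑ i ∈ Finset.range l,
        ((∏ a ∈ Finset.range (k * (m + 1)), (1 + z * q ^ (a + 1))) /
            (∏ a ∈ Finset.range (l * (m + 1) - i), (1 - q ^ (a + 1)))) *
          z ^ (l * (m + 1) - i) *
          q ^ ((l * (m + 1) - i) * ((2 * k + l) * (m + 1) - i + 1) / 2)) +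
      (∑' m : ℕ, ∑ j ∈ Finset.range k,
        ((∏ a ∈ Finset.range (k * (m + 1) - j - 1), (1 + z * q ^ (a + 1))) /
            (∏ a ∈ Finset.range (l * (m + 1) - l), (1 - q ^ (a + 1)))) *
          z ^ (l * (m + 1) - l + 1) *
          q ^ ((l * (m + 1) - l + 1) * ((2 * k + l) * (m + 1) - 2 * j - l) / 2)) :=
  kl_rank_identity_general k l hl q z hq
end

section
/- For all complex q with |q| < 1, (q;q)_∞ = 1 + ∑_{m=1}^{∞} (-1)^m [ (q^{m+1};q)_m q^{m(5m+1)/2} + (q^m;q)_m q^{m(5m-1)/2} + (q^m;q)_{m-1} q^{m(5m-3)/2} ]. -/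
/-!
Put `S_M = ∑_{j=0}^{M} (-1)^j q^{(2M+1)j + C(j,2)} (q^{j+1};q)_{2M-j}`. Its `j = 0` term is
`(q;q)_{2M}` and the others are `O(|q|^{2M+1})` uniformly in `j`, so `S_M → (q;q)_∞`. On the other
hand `S_0 = 1`, and `S_{M+1} - S_M` is the `(M+1)`-st term of the heptagonal series: passing from
`M` to `M + 1` changes the `j`-th term by a difference `V(j+1) - V(j)` that telescopes, and what
survives, `V(M+1)` plus the new term `j = M + 1`, is exactly the three products of that term.
-/

open Finset Filter Topology

namespace Heptagonal

section Algebra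

variable {R : Type*} [CommRing R]

def qPochhammer (a q : R) (n : ℕ) : R := ∏ i ∈ range n, (1 - a * q ^ i)

@[simp] lemma qPochhammer_zero (a q : R) : qPochhammer a q 0 = 1 := prod_range_zero _

lemma qPochhammer_succ (a q : R) (n : ℕ) :
    qPochhammer a q (n + 1) = qPochhammer a q n * (1 - a * q ^ n) :=
  prod_range_succ _ _

lemma qPochhammer_succ' (a q : R) (n : ℕ) :
    qPochhammer a q (n + 1) = (1 - a) * qPochhammer (a * q) q n := by
  simp only [qPochhammer, prod_range_succ', pow_zero, mul_one, pow_succ', mul_assoc, mul_comm]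

lemma qPochhammer_one_succ (q : R) (n : ℕ) : qPochhammer 1 q (n + 1) = 0 := by
  rw [qPochhammer_succ', sub_self, zero_mul]

def term (q : R) (N j : ℕ) : R :=
  (-1) ^ j * (qPochhammer (q ^ (j + 1)) q (N - j) * q ^ ((N + 1) * j + j.choose 2))

/-- The antidifference `V` in `j` of `term q (N + 2) j - term q N j`. -/
def potential (q : R) (N j : ℕ) : R :=
  (-1) ^ j * ((qPochhammer (q ^ j) q (N + 1 - j) + q ^ j * qPochhammer (q ^ j) q (N + 2 - j)) *
    q ^ ((N + 1) * j + j.choose 2))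

lemma potential_zero (q : R) (N : ℕ) : potential q N 0 = 0 := by
  simp [potential, qPochhammer_one_succ]

lemma term_add_two_sub_term (q : R) {N j : ℕ} (hj : j ≤ N) :
    term q (N + 2) j - term q N j = potential q N (j + 1) - potential q N j := by
  obtain ⟨n, rfl⟩ := Nat.exists_eq_add_of_le hj
  have hP₁ : qPochhammer (q ^ j) q (n + 1) = (1 - q ^ j) * qPochhammer (q ^ (j + 1)) q n := by
    rw [qPochhammer_succ', ← pow_succ]
  have hP₂ : qPochhammer (q ^ j) q (n + 2) =
      (1 - q ^ j) * (qPochhammer (q ^ (j + 1)) q n * (1 - q ^ (j + 1) * q ^ n)) := by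
    rw [qPochhammer_succ', ← pow_succ, qPochhammer_succ]
  simp only [term, potential, show j + n + 2 - j = n + 2 by omega, show j + n - j = n by omega,
    show j + n + 1 - j = n + 1 by omega, show j + n + 1 - (j + 1) = n by omega,
    show j + n + 2 - (j + 1) = n + 1 by omega, hP₁, hP₂, qPochhammer_succ, Nat.choose_succ_succ',
    Nat.choose_one_right]
  ring

def partialSum (q : R) (M : ℕ) : R := ∑ j ∈ range (M + 1), term q (2 * M) j

def summand (q : R) (m : ℕ) : R :=
  (-1) ^ (m + 1) *
    (qPochhammer (q ^ (m + 2)) q (m + 1) * q ^ ((m + 1) * (5 * (m + 1) + 1) / 2) +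
      qPochhammer (q ^ (m + 1)) q (m + 1) * q ^ ((m + 1) * (5 * (m + 1) - 1) / 2) +
      qPochhammer (q ^ (m + 1)) q m * q ^ ((m + 1) * (5 * (m + 1) - 3) / 2))

lemma summand_eq_term_add_potential (q : R) (M : ℕ) :
    summand q M = term q (2 * M + 2) (M + 1) + potential q (2 * M) (M + 1) := by
  have hc : (M + 1).choose 2 * 2 = (M + 1) * M := by
    simpa using (Nat.add_one_mul_choose_eq M 1).symm
  have e₁ : (M + 1) * (5 * (M + 1) + 1) / 2 = (2 * M + 2 + 1) * (M + 1) + (M + 1).choose 2 :=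
    Nat.div_eq_of_eq_mul_left two_pos (by linarith)
  have e₂ : (M + 1) * (5 * (M + 1) - 1) / 2 =
      (M + 1) + ((2 * M + 1) * (M + 1) + (M + 1).choose 2) :=
    Nat.div_eq_of_eq_mul_left two_pos (by rw [show 5 * (M + 1) - 1 = 5 * M + 4 by omega]; linarith)
  have e₃ : (M + 1) * (5 * (M + 1) - 3) / 2 = (2 * M + 1) * (M + 1) + (M + 1).choose 2 :=
    Nat.div_eq_of_eq_mul_left two_pos (by rw [show 5 * (M + 1) - 3 = 5 * M + 2 by omega]; linarith)
  rw [summand, term, potential, e₁, e₂, e₃, pow_add q (M + 1),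
    show 2 * M + 2 - (M + 1) = M + 1 by omega, show 2 * M + 1 - (M + 1) = M by omega]
  ring

lemma partialSum_zero (q : R) : partialSum q 0 = 1 := by
  simp [partialSum, term]

lemma partialSum_succ (q : R) (M : ℕ) : partialSum q (M + 1) = partialSum q M + summand q M := by
  have hsum : ∑ j ∈ range (M + 1), term q (2 * M + 2) j =
      partialSum q M + potential q (2 * M) (M + 1) := by
    rw [partialSum, ← sub_eq_iff_eq_add', ← sum_sub_distrib,
      sum_congr rfl fun j hj => term_add_two_sub_term q (by simp at hj; omega),
      sum_range_sub, potential_zero, sub_zero]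
  rw [partialSum, sum_range_succ, mul_add, mul_one, hsum, summand_eq_term_add_potential]
  ring

lemma partialSum_eq_one_add_sum (q : R) (M : ℕ) :
    partialSum q M = 1 + ∑ m ∈ range M, summand q m := by
  induction M with
  | zero => simp [partialSum_zero]
  | succ M ih => rw [partialSum_succ, ih, sum_range_succ, add_assoc]

lemma partialSum_eq_qPochhammer_add (q : R) (M : ℕ) :
    partialSum q M = qPochhammer q q (2 * M) + ∑ j ∈ range M, term q (2 * M) (j + 1) := by
  simp [partialSum, sum_range_succ', term, add_comm]

end Algebra

section Analysis

variable {R : Type*} [NormedCommRing R]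

lemma norm_neg_one_pow_mul (n : ℕ) (x : R) : ‖(-1) ^ n * x‖ = ‖x‖ := by
  rcases neg_one_pow_eq_or R n with h | h <;> simp [h]

variable [NormOneClass R] {q : R}

lemma norm_pow_le_one (hq : ‖q‖ < 1) (k : ℕ) : ‖q ^ k‖ ≤ 1 :=
  (norm_pow_le q k).trans (pow_le_one₀ (norm_nonneg q) hq.le)

lemma norm_qPochhammer_le {a : R} (ha : ‖a‖ ≤ 1) (hq : ‖q‖ < 1) (n : ℕ) :
    ‖qPochhammer a q n‖ ≤ Real.exp (1 - ‖q‖)⁻¹ := by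
  have hfactor (i : ℕ) : ‖1 - a * q ^ i‖ ≤ 1 + ‖q‖ ^ i :=
    calc ‖1 - a * q ^ i‖ ≤ ‖(1 : R)‖ + ‖a‖ * ‖q ^ i‖ :=
          (norm_sub_le _ _).trans (add_le_add_right (norm_mul_le _ _) _)
      _ ≤ 1 + 1 * ‖q‖ ^ i := by
          rw [norm_one]
          exact add_le_add_right (mul_le_mul ha (norm_pow_le q i) (norm_nonneg _) zero_le_one) _
      _ = 1 + ‖q‖ ^ i := by rw [one_mul]
  calc ‖qPochhammer a q n‖ ≤ ∏ i ∈ range n, (1 + ‖q‖ ^ i) :=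
        (Finset.norm_prod_le _ _).trans <|
          prod_le_prod (fun _ _ => norm_nonneg _) fun i _ => hfactor i
    _ ≤ Real.exp (∑ i ∈ range n, ‖q‖ ^ i) :=
        Real.prod_one_add_le_exp_sum _ fun i => by positivity
    _ ≤ Real.exp (1 - ‖q‖)⁻¹ := by
        have hgeom := geom_sum_Ico_le_of_lt_one (m := 0) (n := n) (norm_nonneg q) hq
        rw [← range_eq_Ico, pow_zero, one_div] at hgeom
        exact Real.exp_le_exp.2 hgeom

lemma norm_qPochhammer_mul_pow_le {a : R} (ha : ‖a‖ ≤ 1) (hq : ‖q‖ < 1) {k e : ℕ} (hke : k ≤ e)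
    (n : ℕ) : ‖qPochhammer a q n * q ^ e‖ ≤ Real.exp (1 - ‖q‖)⁻¹ * ‖q‖ ^ k :=
  (norm_mul_le _ _).trans <| mul_le_mul (norm_qPochhammer_le ha hq n)
    ((norm_pow_le q e).trans (pow_le_pow_of_le_one (norm_nonneg q) hq.le hke)) (norm_nonneg _)
    (Real.exp_pos _).le

lemma norm_summand_le (hq : ‖q‖ < 1) (m : ℕ) :
    ‖summand q m‖ ≤ 3 * Real.exp (1 - ‖q‖)⁻¹ * ‖q‖ ^ (m + 1) := by
  have hbound (k : ℕ) {c : ℕ} (hc : 2 ≤ c) (n : ℕ) :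
      ‖qPochhammer (q ^ k) q n * q ^ ((m + 1) * c / 2)‖ ≤ Real.exp (1 - ‖q‖)⁻¹ * ‖q‖ ^ (m + 1) :=
    norm_qPochhammer_mul_pow_le (norm_pow_le_one hq k) hq
      ((Nat.le_div_iff_mul_le two_pos).2 (Nat.mul_le_mul_left _ hc)) n
  rw [summand, norm_neg_one_pow_mul]
  refine norm_add₃_le.trans ?_
  linarith [hbound (m + 2) (c := 5 * (m + 1) + 1) (by omega) (m + 1),
    hbound (m + 1) (c := 5 * (m + 1) - 1) (by omega) (m + 1),
    hbound (m + 1) (c := 5 * (m + 1) - 3) (by omega) m]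

lemma norm_term_succ_le (hq : ‖q‖ < 1) (N j : ℕ) :
    ‖term q N (j + 1)‖ ≤ Real.exp (1 - ‖q‖)⁻¹ * ‖q‖ ^ (N + 1 + j) := by
  rw [term, norm_neg_one_pow_mul]
  exact norm_qPochhammer_mul_pow_le (norm_pow_le_one hq _) hq (by nlinarith) _

lemma norm_sum_term_succ_le (hq : ‖q‖ < 1) (N M : ℕ) :
    ‖∑ j ∈ range M, term q N (j + 1)‖ ≤ Real.exp (1 - ‖q‖)⁻¹ * (‖q‖ ^ (N + 1) / (1 - ‖q‖)) :=
  calc ‖∑ j ∈ range M, term q N (j + 1)‖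
      ≤ ∑ j ∈ range M, Real.exp (1 - ‖q‖)⁻¹ * ‖q‖ ^ (N + 1 + j) :=
        norm_sum_le_of_le _ fun j _ => norm_term_succ_le hq N j
    _ = Real.exp (1 - ‖q‖)⁻¹ * ∑ i ∈ Ico (N + 1) (N + 1 + M), ‖q‖ ^ i := by
        rw [mul_sum, sum_Ico_eq_sum_range, add_tsub_cancel_left]
    _ ≤ _ := by gcongr; exact geom_sum_Ico_le_of_lt_one (norm_nonneg q) hq

variable [CompleteSpace R]

lemma summable_summand (hq : ‖q‖ < 1) : Summable (summand q) := by
  refine Summable.of_norm_bounded ?_ (norm_summand_le hq)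
  exact ((summable_nat_add_iff 1).mpr (summable_geometric_of_lt_one (norm_nonneg q) hq)).mul_left _

lemma tendsto_qPochhammer_self (hq : ‖q‖ < 1) :
    Tendsto (qPochhammer q q) atTop (𝓝 (∏' i : ℕ, (1 - q ^ (i + 1)))) := by
  have hsummable : Summable fun i : ℕ => ‖-q ^ (i + 1)‖ :=
    Summable.of_nonneg_of_le (fun _ => norm_nonneg _)
      (fun i => (norm_neg _).trans_le (norm_pow_le q _))
      ((summable_nat_add_iff 1).mpr (summable_geometric_of_lt_one (norm_nonneg q) hq))
  have hmul := multipliable_one_add_of_summable hsummable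
  simp only [← sub_eq_add_neg] at hmul
  convert hmul.tendsto_prod_tprod_nat using 2 with n
  simp [qPochhammer, pow_succ']

lemma tendsto_partialSum (hq : ‖q‖ < 1) :
    Tendsto (partialSum q) atTop (𝓝 (∏' i : ℕ, (1 - q ^ (i + 1)))) := by
  have h2M : Tendsto (fun M : ℕ => 2 * M) atTop atTop :=
    (strictMono_mul_left_of_pos two_pos).tendsto_atTop
  have htail : Tendsto (fun M => ∑ j ∈ range M, term q (2 * M) (j + 1)) atTop (𝓝 0) := by
    refine squeeze_zero_norm (fun M => norm_sum_term_succ_le hq (2 * M) M) ?_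
    have hpow : Tendsto (fun M : ℕ => ‖q‖ ^ (2 * M + 1)) atTop (𝓝 0) :=
      (tendsto_pow_atTop_nhds_zero_of_lt_one (norm_nonneg q) hq).comp
        ((tendsto_add_atTop_nat 1).comp h2M)
    simpa using (hpow.div_const (1 - ‖q‖)).const_mul (Real.exp (1 - ‖q‖)⁻¹)
  have hlim := ((tendsto_qPochhammer_self hq).comp h2M).add htail
  rw [add_zero] at hlim
  exact hlim.congr fun M => (partialSum_eq_qPochhammer_add q M).symm

lemma hasSum_summand (hq : ‖q‖ < 1) :
    HasSum (summand q) (∏' i : ℕ, (1 - q ^ (i + 1)) - 1) := by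
  refine (summable_summand hq).hasSum_iff_tendsto_nat.2 ?_
  simpa [partialSum_eq_one_add_sum] using (tendsto_partialSum hq).sub_const 1

end Analysis

end Heptagonal

/-- Heptagonal identity (Corollary 3.7, first form): for `|q| < 1`,
`(q;q)_∞ = 1 + ∑_{m=1}^∞ (-1)^m [ (q^{m+1};q)_m q^{m(5m+1)/2}
  + (q^m;q)_m q^{m(5m-1)/2} + (q^m;q)_{m-1} q^{m(5m-3)/2} ]`.
(The series index is shifted: `m + 1` plays the role of `m ≥ 1`.) -/
theorem heptagonal_identity (q : ℂ) (hq : ‖q‖ < 1) :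
    (∏' i : ℕ, (1 - q ^ (i + 1))) =
      1 + ∑' m : ℕ, (-1 : ℂ) ^ (m + 1) *
        ((∏ i ∈ Finset.range (m + 1), (1 - q ^ (m + 2) * q ^ i)) *
            q ^ ((m + 1) * (5 * (m + 1) + 1) / 2) +
          (∏ i ∈ Finset.range (m + 1), (1 - q ^ (m + 1) * q ^ i)) *
            q ^ ((m + 1) * (5 * (m + 1) - 1) / 2) +
          (∏ i ∈ Finset.range m, (1 - q ^ (m + 1) * q ^ i)) *
            q ^ ((m + 1) * (5 * (m + 1) - 3) / 2)) := by
  show _ = 1 + ∑' m : ℕ, Heptagonal.summand q m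
  rw [(Heptagonal.hasSum_summand hq).tsum_eq, add_sub_cancel]
end

section
/- Fix a positive integer ℓ. For all complex numbers q and z with |q| < 1, (-zq;q)_∞ = 1 + ∑_{m=1}^{∞} ∑_{i=0}^{ℓ-1} ((-zq;q)_m/(q;q)_{ℓm-i}) z^{ℓm-i} q^{(ℓm-i)((2+ℓ)m-i+1)/2} + ∑_{m=1}^{∞} ((-zq;q)_{m-1}/(q;q)_{ℓm-ℓ}) z^{ℓm-ℓ+1} q^{(ℓm-ℓ+1)((2+ℓ)m-ℓ)/2}. -/
open Finset Filter Topology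

noncomputable def Pp (z q : ℂ) (m : ℕ) : ℂ := ∏ a ∈ Finset.range m, (1 + z * q ^ (a + 1))
noncomputable def Qd (q : ℂ) (n : ℕ) : ℂ := ∏ a ∈ Finset.range n, (1 - q ^ (a + 1))
noncomputable def Tt (z q : ℂ) (m j : ℕ) : ℂ :=
  Pp z q m * z ^ j * q ^ (j * (j + 1) / 2 + j * m) / Qd q j

lemma Pp_succ (z q : ℂ) (m : ℕ) : Pp z q (m + 1) = Pp z q m * (1 + z * q ^ (m + 1)) :=
  Finset.prod_range_succ _ _

lemma Qd_succ (q : ℂ) (n : ℕ) : Qd q (n + 1) = Qd q n * (1 - q ^ (n + 1)) :=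
  Finset.prod_range_succ _ _

lemma exp_split (n M : ℕ) : n * (2 * M + n + 1) / 2 = n * M + n * (n + 1) / 2 := by
  have h1 : n * (2 * M + n + 1) = 2 * (n * M) + n * (n + 1) := by ring
  obtain ⟨c, hc⟩ := Nat.even_mul_succ_self n
  omega

lemma one_sub_norm (q : ℂ) (hq : ‖q‖ < 1) (n : ℕ) : 1 - ‖q‖ ≤ ‖(1 : ℂ) - q ^ (n + 1)‖ := by
  have h1 : ‖q ^ (n + 1)‖ ≤ ‖q‖ := by
    rw [norm_pow]
    exact pow_le_of_le_one (norm_nonneg q) hq.le (Nat.succ_ne_zero n)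
  calc 1 - ‖q‖ ≤ 1 - ‖q ^ (n + 1)‖ := by linarith
    _ = ‖(1 : ℂ)‖ - ‖q ^ (n + 1)‖ := by simp
    _ ≤ ‖(1 : ℂ) - q ^ (n + 1)‖ := norm_sub_norm_le _ _

lemma one_sub_ne (q : ℂ) (hq : ‖q‖ < 1) (n : ℕ) : (1 : ℂ) - q ^ (n + 1) ≠ 0 := by
  have := one_sub_norm q hq n
  intro h
  rw [h, norm_zero] at this
  linarith

lemma Qd_norm (q : ℂ) (hq : ‖q‖ < 1) (n : ℕ) : (1 - ‖q‖) ^ n ≤ ‖Qd q n‖ := by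
  rw [Qd, norm_prod]
  rw [show (1 - ‖q‖) ^ n = ∏ _a ∈ Finset.range n, (1 - ‖q‖) by rw [Finset.prod_const, Finset.card_range]]
  exact Finset.prod_le_prod (fun _ _ => by linarith) (fun i _ => one_sub_norm q hq i)

lemma Qd_ne (q : ℂ) (hq : ‖q‖ < 1) (n : ℕ) : Qd q n ≠ 0 := by
  have h1 : (0 : ℝ) < (1 - ‖q‖) ^ n := pow_pos (by linarith) n
  have := Qd_norm q hq n
  intro h
  rw [h, norm_zero] at this
  linarith

lemma T_succ_m (z q : ℂ) (m j : ℕ) :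
    Tt z q (m + 1) j = (1 + z * q ^ (m + 1)) * q ^ j * Tt z q m j := by
  unfold Tt
  rw [Pp_succ, show j * (j + 1) / 2 + j * (m + 1) = (j * (j + 1) / 2 + j * m) + j by
    rw [Nat.mul_succ]; ring, pow_add]
  ring

lemma T_succ_j (z q : ℂ) (hq : ‖q‖ < 1) (m j : ℕ) :
    (1 - q ^ (j + 1)) * Tt z q m (j + 1) = z * q ^ (m + j + 1) * Tt z q m j := by
  have h2 : (j + 1) * (j + 2) / 2 = j * (j + 1) / 2 + (j + 1) := by
    have h3 : (j + 1) * (j + 2) = j * (j + 1) + 2 * (j + 1) := by ring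
    obtain ⟨c, hc⟩ := Nat.even_mul_succ_self j
    omega
  unfold Tt
  rw [Qd_succ, show (j+1) * ((j+1) + 1) / 2 + (j+1) * m = (j * (j + 1) / 2 + j * m) + (m + j + 1) by
      rw [show (j+1) + 1 = j + 2 from rfl, h2, Nat.succ_mul]; ring]
  rw [pow_add q (j * (j + 1) / 2 + j * m) (m + j + 1)]
  have hQ := Qd_ne q hq j
  have h1 := one_sub_ne q hq j
  rw [mul_comm (Qd q j) (1 - q ^ (j + 1)), ← div_div, ← mul_div_assoc,
    mul_div_cancel₀ _ h1]
  ring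

lemma sum_diff (z q : ℂ) (hq : ‖q‖ < 1) (m k : ℕ) :
    ∑ j ∈ Finset.range (k + 1), (Tt z q (m + 1) j - Tt z q m j) =
      (1 - q ^ (k + 1)) * Tt z q m (k + 1) := by
  have key : ∀ j, Tt z q (m + 1) j - Tt z q m j =
      (1 - q ^ (j + 1)) * Tt z q m (j + 1) - (1 - q ^ j) * Tt z q m j := by
    intro j
    rw [T_succ_j z q hq m j, T_succ_m z q m j,
      show m + j + 1 = (m + 1) + j by ring, pow_add]
    ring
  rw [Finset.sum_congr rfl (fun j _ => key j),
    Finset.sum_range_sub (fun j => (1 - q ^ j) * Tt z q m j)]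
  simp

noncomputable def Ss (z q : ℂ) (l M : ℕ) : ℂ := ∑ j ∈ Finset.range (l * M + 1), Tt z q M j
noncomputable def blockT (z q : ℂ) (l m : ℕ) : ℂ :=
  ∑ i ∈ Finset.range l, Tt z q (m + 1) (l * (m + 1) - i)
noncomputable def Bt (z q : ℂ) (l m : ℕ) : ℂ := (1 - q ^ (l * m + 1)) * Tt z q m (l * m + 1)

lemma S_succ (z q : ℂ) (hq : ‖q‖ < 1) (l : ℕ) (hl : 0 < l) (M : ℕ) :
    Ss z q l (M + 1) = Ss z q l M + blockT z q l M + Bt z q l M := by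
  have hml : l * (M + 1) = l * M + l := by ring
  have h : l * (M + 1) + 1 = (l * M + 1) + l := by omega
  rw [Ss, h, Finset.range_eq_Ico, ← Finset.sum_Ico_consecutive _ (Nat.zero_le (l * M + 1))
    (Nat.le_add_right _ l)]
  have hfirst : ∑ j ∈ Finset.Ico 0 (l * M + 1), Tt z q (M + 1) j = Ss z q l M + Bt z q l M := by
    rw [← Finset.range_eq_Ico]
    have h4 : ∀ j ∈ Finset.range (l * M + 1), Tt z q (M + 1) j =
        Tt z q M j + (Tt z q (M + 1) j - Tt z q M j) := fun j _ => by ring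
    rw [Finset.sum_congr rfl h4, Finset.sum_add_distrib, sum_diff z q hq M (l * M)]
    rfl
  have hsecond : ∑ j ∈ Finset.Ico (l * M + 1) (l * M + 1 + l), Tt z q (M + 1) j =
      blockT z q l M := by
    rw [Finset.sum_Ico_eq_sum_range]
    simp only [Nat.add_sub_cancel_left]
    rw [blockT, ← Finset.sum_range_reflect]
    apply Finset.sum_congr rfl
    intro i hi
    have hi' := Finset.mem_range.mp hi
    congr 1
    omega
  rw [hfirst, hsecond]
  ring

lemma Ss_zero (z q : ℂ) (l : ℕ) : Ss z q l 0 = 1 := by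
  simp [Ss, Tt, Pp, Qd]

lemma Ss_eq (z q : ℂ) (hq : ‖q‖ < 1) (l : ℕ) (hl : 0 < l) (M : ℕ) :
    Ss z q l M = 1 + ∑ m ∈ Finset.range M, (blockT z q l m + Bt z q l m) := by
  induction M with
  | zero => simp [Ss_zero]
  | succ M ih =>
    rw [S_succ z q hq l hl M, ih, Finset.sum_range_succ]
    ring

lemma hP_tendsto (z q : ℂ) (hq : ‖q‖ < 1) :
    Tendsto (fun M => Pp z q M) atTop (𝓝 (∏' i : ℕ, (1 + z * q ^ (i + 1)))) := by
  by_cases h : ∀ i : ℕ, (1 : ℂ) + z * q ^ (i + 1) ≠ 0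
  · have hlog : Summable (fun n : ℕ => Complex.log (1 + z * q ^ (n + 1))) := by
      have hg : Summable (fun n : ℕ => (3 / 2 * ‖z‖ * ‖q‖) * ‖q‖ ^ n) :=
        (summable_geometric_of_lt_one (norm_nonneg q) hq).mul_left _
      apply Summable.of_norm_bounded_eventually_nat hg
      have h0 : Tendsto (fun n : ℕ => ‖z‖ * ‖q‖ * ‖q‖ ^ n) atTop (𝓝 0) := by
        simpa using (tendsto_pow_atTop_nhds_zero_of_lt_one (norm_nonneg q) hq).const_mul
          (‖z‖ * ‖q‖)
      filter_upwards [h0.eventually_lt_const (by norm_num : (0:ℝ) < 1/2)] with n hn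
      have hzq : ‖z * q ^ (n + 1)‖ = ‖z‖ * ‖q‖ * ‖q‖ ^ n := by
        rw [norm_mul, norm_pow, pow_succ']; ring
      calc ‖Complex.log (1 + z * q ^ (n + 1))‖ ≤ 3 / 2 * ‖z * q ^ (n + 1)‖ :=
            Complex.norm_log_one_add_half_le_self (by rw [hzq]; linarith)
        _ = 3 / 2 * ‖z‖ * ‖q‖ * ‖q‖ ^ n := by rw [hzq]; ring
    have hmul : Multipliable (fun n : ℕ => (1 : ℂ) + z * q ^ (n + 1)) :=
      Complex.multipliable_of_summable_log hlog
    exact hmul.hasProd.tendsto_prod_nat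
  · push_neg at h
    obtain ⟨i0, h0⟩ := h
    have hzero : HasProd (fun i : ℕ => (1 : ℂ) + z * q ^ (i + 1)) 0 := by
      apply tendsto_nhds_of_eventually_eq
      filter_upwards [eventually_ge_atTop ({i0} : Finset ℕ)] with s hs
      exact Finset.prod_eq_zero (Finset.singleton_subset_iff.mp hs) h0
    rw [hzero.tprod_eq]
    apply tendsto_nhds_of_eventually_eq
    filter_upwards [eventually_ge_atTop (i0 + 1)] with M hM
    exact Finset.prod_eq_zero (Finset.mem_range.mpr (by omega)) h0

noncomputable def Uu (z q : ℂ) (l M : ℕ) : ℂ :=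
  ∑ j ∈ Finset.range (l * M + 1), z ^ j * q ^ (j * (j + 1) / 2 + j * M) / Qd q j

lemma Ss_eq_mul (z q : ℂ) (l M : ℕ) : Ss z q l M = Pp z q M * Uu z q l M := by
  rw [Ss, Uu, Finset.mul_sum]
  exact Finset.sum_congr rfl fun j _ => by rw [Tt]; ring

lemma term_norm_le (z q : ℂ) (hq : ‖q‖ < 1) (M j : ℕ) :
    ‖z ^ j * q ^ (j * (j + 1) / 2 + j * M) / Qd q j‖ ≤ (‖z‖ / (1 - ‖q‖) * ‖q‖ ^ M) ^ j := by
  have hb0 : (0 : ℝ) ≤ ‖q‖ := norm_nonneg q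
  have h1q : (0 : ℝ) < 1 - ‖q‖ := by linarith
  rw [norm_div, norm_mul, norm_pow, norm_pow]
  have hnum : ‖z‖ ^ j * ‖q‖ ^ (j * (j + 1) / 2 + j * M) ≤ ‖z‖ ^ j * (‖q‖ ^ M) ^ j := by
    apply mul_le_mul_of_nonneg_left _ (pow_nonneg (norm_nonneg z) j)
    rw [← pow_mul]
    exact pow_le_pow_of_le_one hb0 hq.le (by nlinarith [Nat.zero_le (j * (j + 1) / 2)])
  calc ‖z‖ ^ j * ‖q‖ ^ (j * (j + 1) / 2 + j * M) / ‖Qd q j‖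
      ≤ ‖z‖ ^ j * (‖q‖ ^ M) ^ j / (1 - ‖q‖) ^ j := by
        apply div_le_div₀ (by positivity) hnum (pow_pos h1q j) (Qd_norm q hq j)
    _ = (‖z‖ / (1 - ‖q‖) * ‖q‖ ^ M) ^ j := by
        rw [mul_pow, div_pow]; ring

lemma Uu_tendsto (z q : ℂ) (hq : ‖q‖ < 1) (l : ℕ) :
    Tendsto (fun M => Uu z q l M) atTop (𝓝 1) := by
  have hb0 : (0 : ℝ) ≤ ‖q‖ := norm_nonneg q
  set w : ℝ := ‖z‖ / (1 - ‖q‖) with hw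
  have hw0 : 0 ≤ w := div_nonneg (norm_nonneg z) (by linarith)
  have hr0 : Tendsto (fun M : ℕ => w * ‖q‖ ^ M) atTop (𝓝 0) := by
    simpa using (tendsto_pow_atTop_nhds_zero_of_lt_one hb0 hq).const_mul w
  rw [← tendsto_sub_nhds_zero_iff]
  apply squeeze_zero_norm' (a := fun M => 2 * (w * ‖q‖ ^ M))
  · filter_upwards [hr0.eventually_le_const (by norm_num : (0:ℝ) < 1/2)] with M hM
    set r : ℝ := w * ‖q‖ ^ M with hrdef
    have hr0' : 0 ≤ r := mul_nonneg hw0 (pow_nonneg hb0 M)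
    have hsplit : Uu z q l M = 1 + ∑ j ∈ Finset.Ico 1 (l * M + 1),
        z ^ j * q ^ (j * (j + 1) / 2 + j * M) / Qd q j := by
      rw [Uu, Finset.range_eq_Ico, Finset.sum_eq_sum_Ico_succ_bot (Nat.succ_pos (l * M))]
      congr 1
      simp [Qd]
    rw [hsplit]
    simp only [add_sub_cancel_left]
    calc ‖∑ j ∈ Finset.Ico 1 (l * M + 1), z ^ j * q ^ (j * (j + 1) / 2 + j * M) / Qd q j‖
        ≤ ∑ j ∈ Finset.Ico 1 (l * M + 1), ‖z ^ j * q ^ (j * (j + 1) / 2 + j * M) / Qd q j‖ :=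
          norm_sum_le _ _
      _ ≤ ∑ j ∈ Finset.Ico 1 (l * M + 1), r ^ j :=
          Finset.sum_le_sum fun j _ => term_norm_le z q hq M j
      _ = ∑ i ∈ Finset.range (l * M + 1 - 1), r ^ (1 + i) := Finset.sum_Ico_eq_sum_range _ _ _
      _ ≤ ∑ i ∈ Finset.range (l * M + 1 - 1), r * (1 / 2) ^ i := by
          apply Finset.sum_le_sum
          intro i _
          rw [pow_add, pow_one]
          exact mul_le_mul_of_nonneg_left (pow_le_pow_left₀ hr0' hM i) hr0'
      _ = r * ∑ i ∈ Finset.range (l * M + 1 - 1), (1 / 2) ^ i := by rw [Finset.mul_sum]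
      _ ≤ r * 2 := mul_le_mul_of_nonneg_left (sum_geometric_two_le _) hr0'
      _ = 2 * (w * ‖q‖ ^ M) := by rw [hrdef]; ring
  · simpa using hr0.const_mul 2

lemma Ss_tendsto (z q : ℂ) (hq : ‖q‖ < 1) (l : ℕ) :
    Tendsto (fun M => Ss z q l M) atTop (𝓝 (∏' i : ℕ, (1 + z * q ^ (i + 1)))) := by
  have h := (hP_tendsto z q hq).mul (Uu_tendsto z q hq l)
  rw [mul_one] at h
  exact h.congr fun M => (Ss_eq_mul z q l M).symm

lemma Tt_norm_le (z q : ℂ) (hq : ‖q‖ < 1) {D : ℝ} (hD : ∀ M, ‖Pp z q M‖ ≤ D) (m j : ℕ) :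
    ‖Tt z q m j‖ ≤ D * (‖z‖ / (1 - ‖q‖) * ‖q‖ ^ m) ^ j := by
  have h1 : Tt z q m j = Pp z q m * (z ^ j * q ^ (j * (j + 1) / 2 + j * m) / Qd q j) := by
    rw [Tt]; ring
  rw [h1, norm_mul]
  exact mul_le_mul (hD m) (term_norm_le z q hq m j) (norm_nonneg _)
    (le_trans (norm_nonneg _) (hD 0))

lemma summable_blockT (z q : ℂ) (hq : ‖q‖ < 1) (l : ℕ) (hl : 0 < l) :
    Summable (fun m => blockT z q l m) := by
  have hb0 : (0 : ℝ) ≤ ‖q‖ := norm_nonneg q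
  obtain ⟨D, hD⟩ := (hP_tendsto z q hq).norm.bddAbove_range
  have hD' : ∀ M, ‖Pp z q M‖ ≤ D := fun M => hD ⟨M, rfl⟩
  have hD0 : 0 ≤ D := le_trans (norm_nonneg _) (hD' 0)
  set w : ℝ := ‖z‖ / (1 - ‖q‖) with hw
  have hw0 : 0 ≤ w := div_nonneg (norm_nonneg z) (by linarith)
  have hr : Tendsto (fun m : ℕ => w * ‖q‖ ^ (m + 1)) atTop (𝓝 0) := by
    have h0 : Tendsto (fun m : ℕ => w * ‖q‖ ^ m) atTop (𝓝 0) := by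
      simpa using (tendsto_pow_atTop_nhds_zero_of_lt_one hb0 hq).const_mul w
    exact h0.comp (tendsto_add_atTop_nat 1)
  apply Summable.of_norm_bounded_eventually_nat (g := fun m => (l * D) * (1 / 2 : ℝ) ^ (m + 1))
  · have hgeo : Summable (fun m : ℕ => ((l * D) * (1 / 2)) * (1 / 2 : ℝ) ^ m) :=
      Summable.mul_left _ (summable_geometric_of_lt_one (by norm_num) (by norm_num))
    exact hgeo.congr fun m => by rw [pow_succ]; ring
  · filter_upwards [hr.eventually_le_const (by norm_num : (0:ℝ) < 1/2)] with m hm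
    have hbase0 : 0 ≤ w * ‖q‖ ^ (m + 1) := mul_nonneg hw0 (pow_nonneg hb0 _)
    calc ‖blockT z q l m‖
        ≤ ∑ i ∈ Finset.range l, ‖Tt z q (m + 1) (l * (m + 1) - i)‖ := norm_sum_le _ _
      _ ≤ ∑ _i ∈ Finset.range l, D * (1 / 2 : ℝ) ^ (m + 1) := by
          apply Finset.sum_le_sum
          intro i hi
          have hi' := Finset.mem_range.mp hi
          have hn : m + 1 ≤ l * (m + 1) - i := by
            have h1 : m + 1 ≤ l * (m + 1) := Nat.le_mul_of_pos_left (m + 1) hl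
            have h2 : l * (m + 1) = l * m + l := by ring
            have h3 : m ≤ l * m := Nat.le_mul_of_pos_left m hl
            omega
          calc ‖Tt z q (m + 1) (l * (m + 1) - i)‖
              ≤ D * (w * ‖q‖ ^ (m + 1)) ^ (l * (m + 1) - i) := Tt_norm_le z q hq hD' _ _
            _ ≤ D * (w * ‖q‖ ^ (m + 1)) ^ (m + 1) := by
                apply mul_le_mul_of_nonneg_left _ hD0
                exact pow_le_pow_of_le_one hbase0 (by linarith) hn
            _ ≤ D * (1 / 2 : ℝ) ^ (m + 1) := by
                apply mul_le_mul_of_nonneg_left _ hD0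
                exact pow_le_pow_left₀ hbase0 hm _
      _ = (l * D) * (1 / 2 : ℝ) ^ (m + 1) := by
          rw [Finset.sum_const, Finset.card_range, nsmul_eq_mul]; ring

lemma summable_Bt (z q : ℂ) (hq : ‖q‖ < 1) (l : ℕ) (hl : 0 < l) :
    Summable (fun m => Bt z q l m) := by
  have hb0 : (0 : ℝ) ≤ ‖q‖ := norm_nonneg q
  obtain ⟨D, hD⟩ := (hP_tendsto z q hq).norm.bddAbove_range
  have hD' : ∀ M, ‖Pp z q M‖ ≤ D := fun M => hD ⟨M, rfl⟩
  have hD0 : 0 ≤ D := le_trans (norm_nonneg _) (hD' 0)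
  set w : ℝ := ‖z‖ / (1 - ‖q‖) with hw
  have hw0 : 0 ≤ w := div_nonneg (norm_nonneg z) (by linarith)
  have hr : Tendsto (fun m : ℕ => w * ‖q‖ ^ m) atTop (𝓝 0) := by
    simpa using (tendsto_pow_atTop_nhds_zero_of_lt_one hb0 hq).const_mul w
  apply Summable.of_norm_bounded_eventually_nat (g := fun m => (2 * D) * (1 / 2 : ℝ) ^ m)
  · exact Summable.mul_left _ (summable_geometric_of_lt_one (by norm_num) (by norm_num))
  · filter_upwards [hr.eventually_le_const (by norm_num : (0:ℝ) < 1/2)] with m hm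
    have hbase0 : 0 ≤ w * ‖q‖ ^ m := mul_nonneg hw0 (pow_nonneg hb0 _)
    have h2 : ‖(1 : ℂ) - q ^ (l * m + 1)‖ ≤ 2 := by
      calc ‖(1 : ℂ) - q ^ (l * m + 1)‖ ≤ ‖(1 : ℂ)‖ + ‖q ^ (l * m + 1)‖ := norm_sub_le _ _
        _ ≤ 1 + 1 := by
            rw [norm_one, norm_pow]
            have : ‖q‖ ^ (l * m + 1) ≤ 1 := pow_le_one₀ hb0 hq.le
            linarith
        _ = 2 := by norm_num
    have hn : m ≤ l * m + 1 := by
      have h1 : m ≤ l * m := Nat.le_mul_of_pos_left m hl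
      omega
    calc ‖Bt z q l m‖ = ‖(1 : ℂ) - q ^ (l * m + 1)‖ * ‖Tt z q m (l * m + 1)‖ := by
          rw [Bt, norm_mul]
      _ ≤ 2 * (D * (w * ‖q‖ ^ m) ^ (l * m + 1)) := by
          apply mul_le_mul h2 (Tt_norm_le z q hq hD' _ _) (norm_nonneg _) (by norm_num)
      _ ≤ 2 * (D * (w * ‖q‖ ^ m) ^ m) := by
          apply mul_le_mul_of_nonneg_left _ (by norm_num)
          apply mul_le_mul_of_nonneg_left _ hD0
          exact pow_le_pow_of_le_one hbase0 (by linarith) hn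
      _ ≤ 2 * (D * (1 / 2 : ℝ) ^ m) := by
          apply mul_le_mul_of_nonneg_left _ (by norm_num)
          apply mul_le_mul_of_nonneg_left _ hD0
          exact pow_le_pow_left₀ hbase0 hm _
      _ = (2 * D) * (1 / 2 : ℝ) ^ m := by ring

/-- Corollary 3.10 (the `k = 1` case of the `(k,ℓ)`-rank identity): for `|q| < 1`,
`(-zq;q)_∞ = 1
  + ∑_{m=1}^∞ ∑_{i=0}^{ℓ-1} ((-zq;q)_m/(q;q)_{ℓm-i}) z^{ℓm-i} q^{(ℓm-i)((2+ℓ)m-i+1)/2}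
  + ∑_{m=1}^∞ ((-zq;q)_{m-1}/(q;q)_{ℓm-ℓ}) z^{ℓm-ℓ+1} q^{(ℓm-ℓ+1)((2+ℓ)m-ℓ)/2}`.
(The outer series index is shifted: `m + 1` plays the role of `m ≥ 1`.) -/
theorem one_l_rank_identity (l : ℕ) (hl : 0 < l)
    (q z : ℂ) (hq : ‖q‖ < 1) :
    (∏' i : ℕ, (1 + z * q ^ (i + 1))) =
      1 +
      (∑' m : ℕ, ∑ i ∈ Finset.range l,
        ((∏ a ∈ Finset.range (m + 1), (1 + z * q ^ (a + 1))) /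
            (∏ a ∈ Finset.range (l * (m + 1) - i), (1 - q ^ (a + 1)))) *
          z ^ (l * (m + 1) - i) *
          q ^ ((l * (m + 1) - i) * ((2 + l) * (m + 1) - i + 1) / 2)) +
      (∑' m : ℕ,
        ((∏ a ∈ Finset.range m, (1 + z * q ^ (a + 1))) /
            (∏ a ∈ Finset.range (l * (m + 1) - l), (1 - q ^ (a + 1)))) *
          z ^ (l * (m + 1) - l + 1) *
          q ^ ((l * (m + 1) - l + 1) * ((2 + l) * (m + 1) - l) / 2)) := by
  have hq1 : ‖q‖ < 1 := hq
  have hblock : ∀ m : ℕ, (∑ i ∈ Finset.range l,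
      ((∏ a ∈ Finset.range (m + 1), (1 + z * q ^ (a + 1))) /
          (∏ a ∈ Finset.range (l * (m + 1) - i), (1 - q ^ (a + 1)))) *
        z ^ (l * (m + 1) - i) *
        q ^ ((l * (m + 1) - i) * ((2 + l) * (m + 1) - i + 1) / 2)) = blockT z q l m := by
    intro m
    rw [blockT]
    apply Finset.sum_congr rfl
    intro i hi
    have hi' := Finset.mem_range.mp hi
    have hil : i ≤ l * (m + 1) := by
      have h1 : l ≤ l * (m + 1) := Nat.le_mul_of_pos_right l (Nat.succ_pos m)
      omega
    set n := l * (m + 1) - i with hn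
    have h2 : (2 + l) * (m + 1) = 2 * (m + 1) + l * (m + 1) := by ring
    have h3 : (2 + l) * (m + 1) - i + 1 = 2 * (m + 1) + n + 1 := by omega
    have hexp : n * ((2 + l) * (m + 1) - i + 1) / 2 = n * (n + 1) / 2 + n * (m + 1) := by
      rw [h3, exp_split n (m + 1)]
      exact Nat.add_comm _ _
    rw [Tt, hexp]
    unfold Pp Qd
    ring
  have hBteq : ∀ m : ℕ,
      ((∏ a ∈ Finset.range m, (1 + z * q ^ (a + 1))) /
          (∏ a ∈ Finset.range (l * (m + 1) - l), (1 - q ^ (a + 1)))) *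
        z ^ (l * (m + 1) - l + 1) *
        q ^ ((l * (m + 1) - l + 1) * ((2 + l) * (m + 1) - l) / 2) = Bt z q l m := by
    intro m
    have hml : l * (m + 1) = l * m + l := by ring
    have hll : l * (m + 1) - l = l * m := by omega
    have hl1 : l * (m + 1) - l + 1 = l * m + 1 := by omega
    have h2 : (2 + l) * (m + 1) = 2 * (m + 1) + (l * m + l) := by ring
    have h3 : (2 + l) * (m + 1) - l = 2 * m + (l * m + 1) + 1 := by omega
    have hexp : (l * (m + 1) - l + 1) * ((2 + l) * (m + 1) - l) / 2 =
        (l * m + 1) * ((l * m + 1) + 1) / 2 + (l * m + 1) * m := by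
      rw [hl1, h3, exp_split (l * m + 1) m]
      exact Nat.add_comm _ _
    rw [hexp, hll, Bt, Tt, Qd_succ,
      mul_comm (Qd q (l * m)) (1 - q ^ (l * m + 1)), ← div_div, ← mul_div_assoc,
      mul_div_cancel₀ _ (one_sub_ne q hq1 (l * m))]
    unfold Pp Qd
    ring
  rw [tsum_congr hblock, tsum_congr hBteq]
  have h1 := summable_blockT z q hq1 l hl
  have h2 := summable_Bt z q hq1 l hl
  have hten := (h1.hasSum.add h2.hasSum).tendsto_sum_nat
  have hS' : Tendsto (fun M => ∑ m ∈ Finset.range M, (blockT z q l m + Bt z q l m)) atTop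
      (𝓝 ((∏' i : ℕ, (1 + z * q ^ (i + 1))) - 1)) := by
    have h := (Ss_tendsto z q hq1 l).sub_const 1
    apply h.congr
    intro M
    rw [Ss_eq z q hq1 l hl M]
    ring
  have hfin := tendsto_nhds_unique hS' hten
  linear_combination hfin
end
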